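/- arXiv:2604.11644 — 3 statements merged into one kernel-verified Lean document; each statement's English description precedes it below -/
import Mathlib

section
/- Let G be a maximally edge-connected simple graph of order m ≥ 3 and let n ≥ 4. If min{n²·δ(G), (n − 1)(m + 2e(G))} ≥ 3n·δ(G) + 3n − 9, then G ⊠ Kₙ is maximally 3-restricted edge-connected, i.e., λ₃(G ⊠ Kₙ) = ξ₃(G ⊠ Kₙ). -/
open SimpleGraph

/-- The strong product of two simple graphs. -/
def strongProd {α β : Type*} (G : SimpleGraph α) (H : SimpleGraph β) :
    SimpleGraph (α × β) where
  Adj p q := (p.1 = q.1 ∧ H.Adj p.2 q.2) ∨ (p.2 = q.2 ∧ G.Adj p.1 q.1) ∨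
    (G.Adj p.1 q.1 ∧ H.Adj p.2 q.2)
  symm := by
    constructor
    rintro ⟨a, b⟩ ⟨c, d⟩ (⟨h1, h2⟩ | ⟨h1, h2⟩ | ⟨h1, h2⟩)
    · exact Or.inl ⟨h1.symm, h2.symm⟩
    · exact Or.inr (Or.inl ⟨h1.symm, h2.symm⟩)
    · exact Or.inr (Or.inr ⟨h1.symm, h2.symm⟩)
  loopless := by
    constructor
    rintro ⟨a, b⟩ (⟨h1, h2⟩ | ⟨h1, h2⟩ | ⟨h1, h2⟩)
    · exact H.loopless.irrefl b h2
    · exact G.loopless.irrefl a h2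
    · exact G.loopless.irrefl a h1

variable {V : Type*}

/-- The degree of a vertex. -/
noncomputable def deg (G : SimpleGraph V) (v : V) : ℕ := (G.neighborSet v).ncard

/-- The minimum degree δ(G). -/
noncomputable def minDeg (G : SimpleGraph V) : ℕ := sInf {k | ∃ v, deg G v = k}

/-- The number of edges e(G). -/
noncomputable def numEdges (G : SimpleGraph V) : ℕ := G.edgeSet.ncard

/-- An edge-cut: a set of edges whose deletion disconnects the graph. -/
def IsEdgeCut (G : SimpleGraph V) (S : Set (Sym2 V)) : Prop :=
  S ⊆ G.edgeSet ∧ ¬ (G.deleteEdges S).Connected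

/-- The edge-connectivity λ(G). -/
noncomputable def edgeConn (G : SimpleGraph V) : ℕ :=
  sInf {k | ∃ S : Set (Sym2 V), IsEdgeCut G S ∧ S.ncard = k}

/-- A k-restricted edge-cut: an edge-cut such that every component of the
resulting graph has at least k vertices. -/
def IsKRestrictedEdgeCut (G : SimpleGraph V) (k : ℕ) (S : Set (Sym2 V)) : Prop :=
  S ⊆ G.edgeSet ∧ ¬ (G.deleteEdges S).Connected ∧
    ∀ c : (G.deleteEdges S).ConnectedComponent, k ≤ c.supp.ncard

/-- The k-restricted edge-connectivity λ_k(G), equal to +∞ (⊤) if no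
k-restricted edge-cut exists. -/
noncomputable def lamK (G : SimpleGraph V) (k : ℕ) : ℕ∞ :=
  sInf {n : ℕ∞ | ∃ S : Set (Sym2 V), IsKRestrictedEdgeCut G k S ∧ (S.ncard : ℕ∞) = n}

/-- The edge boundary ∂_G(X) = [X, V(G)\X]: edges with exactly one endpoint in X. -/
def edgeBoundary (G : SimpleGraph V) (X : Set V) : Set (Sym2 V) :=
  {e | e ∈ G.edgeSet ∧ ∃ u v, e = s(u, v) ∧ u ∈ X ∧ v ∉ X}

/-- The minimum edge-degree ξ(G) = min over edges uv of d(u) + d(v) - 2. -/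
noncomputable def xiMin (G : SimpleGraph V) : ℕ :=
  sInf {k | ∃ u v, G.Adj u v ∧ k = deg G u + deg G v - 2}

/-- ξ₃(G): minimum size of ∂_G(X) over connected induced subgraphs on 3 vertices. -/
noncomputable def xi3 (G : SimpleGraph V) : ℕ :=
  sInf {k | ∃ X : Set V, X.ncard = 3 ∧ (G.induce X).Connected ∧
    k = (edgeBoundary G X).ncard}

/-- K₂ ⊙ H: the strong product K₂ ⊠ H minus the edges inside the two H-layers.
The two vertices of K₂ are represented by `false` (= a) and `true` (= b). -/
def odotK2 {β : Type*} (H : SimpleGraph β) : SimpleGraph (Bool × β) where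
  Adj p q := p.1 ≠ q.1 ∧ (p.2 = q.2 ∨ H.Adj p.2 q.2)
  symm := by
    constructor
    rintro ⟨a, y⟩ ⟨b, z⟩ ⟨h1, h2⟩
    exact ⟨h1.symm, h2.elim (fun h => Or.inl h.symm) (fun h => Or.inr h.symm)⟩
  loopless := by
    constructor
    rintro ⟨a, y⟩ ⟨h1, _⟩
    exact h1 rfl

open Finset
set_option linter.unusedSectionVars false

namespace Aux3

lemma adjH {α : Type*} (G : SimpleGraph α) (n : ℕ) (y z : α × Fin n) :
    (strongProd G (completeGraph (Fin n))).Adj y z ↔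
      (y.1 = z.1 ∧ y.2 ≠ z.2) ∨ G.Adj y.1 z.1 := by
  show (y.1 = z.1 ∧ y.2 ≠ z.2) ∨ (y.2 = z.2 ∧ G.Adj y.1 z.1) ∨ (G.Adj y.1 z.1 ∧ y.2 ≠ z.2) ↔ _
  constructor
  · rintro (h | h | h)
    · exact Or.inl h
    · exact Or.inr h.2
    · exact Or.inr h.1
  · rintro (h | h)
    · exact Or.inl h
    · by_cases hy : y.2 = z.2
      · exact Or.inr (Or.inl ⟨hy, h⟩)
      · exact Or.inr (Or.inr ⟨h, hy⟩)

instance decAdjH {α : Type*} [DecidableEq α] (G : SimpleGraph α) [DecidableRel G.Adj] (n : ℕ) :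
    DecidableRel (strongProd G (completeGraph (Fin n))).Adj :=
  fun y z => decidable_of_iff _ (adjH G n y z).symm

section counting
variable {α : Type*} [DecidableEq α] [Fintype α] (G : SimpleGraph α) [DecidableRel G.Adj] (n : ℕ)

/-- layer count -/
def xC (F : Finset (α × Fin n)) (u : α) : ℕ := (univ.filter fun i : Fin n => (u, i) ∈ F).card

lemma xC_le (F : Finset (α × Fin n)) (u : α) : xC n F u ≤ n := by
  simpa [xC] using (Finset.card_filter_le univ fun i : Fin n => (u, i) ∈ F)

lemma xC_compl (F : Finset (α × Fin n)) (u : α) : xC n Fᶜ u = n - xC n F u := by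
  unfold xC
  have h : (univ.filter fun i : Fin n => (u, i) ∈ Fᶜ)
      = ((univ.filter fun i : Fin n => (u, i) ∈ F)ᶜ) := by
    ext i; simp
  rw [h, Finset.card_compl, Fintype.card_fin]

lemma card_layers (F : Finset (α × Fin n)) : F.card = ∑ u, xC n F u := by
  have h : F = univ.filter (fun y : α × Fin n => y ∈ F) := by ext y; simp
  conv_lhs => rw [h]
  rw [Finset.card_filter, Fintype.sum_prod_type]
  refine Finset.sum_congr rfl fun u _ => ?_
  rw [xC, Finset.card_filter]

end counting
end Aux3

namespace Aux3
section counting2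
variable {α : Type*} [DecidableEq α] [Fintype α] (G : SimpleGraph α) [DecidableRel G.Adj] (n : ℕ)

/-- ordered boundary pairs -/
def OPF {W : Type*} [Fintype W] [DecidableEq W] (K : SimpleGraph W) [DecidableRel K.Adj]
    (F : Finset W) : Finset (W × W) :=
  univ.filter fun p => p.1 ∈ F ∧ p.2 ∉ F ∧ K.Adj p.1 p.2

def Nuv (F : Finset (α × Fin n)) (u v : α) : ℕ :=
  (univ.filter fun ij : Fin n × Fin n =>
    (u, ij.1) ∈ F ∧ (v, ij.2) ∉ F ∧
      (strongProd G (completeGraph (Fin n))).Adj (u, ij.1) (v, ij.2)).card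

lemma B_eq_sum_uv (F : Finset (α × Fin n)) :
    (OPF (strongProd G (completeGraph (Fin n))) F).card = ∑ u, ∑ v, Nuv G n F u v := by
  rw [OPF, Finset.card_filter]
  simp only [Fintype.sum_prod_type]
  refine Finset.sum_congr rfl fun u _ => ?_
  rw [Finset.sum_comm]
  refine Finset.sum_congr rfl fun v _ => ?_
  rw [Nuv, Finset.card_filter]
  simp only [Fintype.sum_prod_type]

lemma filter_not_card (F : Finset (α × Fin n)) (v : α) :
    (univ.filter fun j : Fin n => (v, j) ∉ F).card = n - xC n F v := by
  have h : (univ.filter fun j : Fin n => (v, j) ∉ F)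
      = ((univ.filter fun j : Fin n => (v, j) ∈ F)ᶜ) := by ext j; simp
  rw [h, Finset.card_compl, Fintype.card_fin, xC]

lemma Nuu (F : Finset (α × Fin n)) (u : α) :
    Nuv G n F u u = xC n F u * (n - xC n F u) := by
  rw [Nuv]
  have h : (univ.filter fun ij : Fin n × Fin n =>
      (u, ij.1) ∈ F ∧ (u, ij.2) ∉ F ∧
        (strongProd G (completeGraph (Fin n))).Adj (u, ij.1) (u, ij.2))
      = (univ.filter fun i : Fin n => (u, i) ∈ F) ×ˢ
        (univ.filter fun j : Fin n => (u, j) ∉ F) := by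
    ext ⟨i, j⟩
    simp only [Finset.mem_filter, Finset.mem_univ, true_and, Finset.mem_product, adjH]
    constructor
    · rintro ⟨h1, h2, -⟩; exact ⟨h1, h2⟩
    · rintro ⟨h1, h2⟩
      refine ⟨h1, h2, Or.inl ?_⟩
      intro hij
      exact h2 (hij ▸ h1)
  rw [h, Finset.card_product, filter_not_card]; rfl

lemma Nuv_adj (F : Finset (α × Fin n)) {u v : α} (huv : G.Adj u v) :
    Nuv G n F u v = xC n F u * (n - xC n F v) := by
  rw [Nuv]
  have h : (univ.filter fun ij : Fin n × Fin n =>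
      (u, ij.1) ∈ F ∧ (v, ij.2) ∉ F ∧
        (strongProd G (completeGraph (Fin n))).Adj (u, ij.1) (v, ij.2))
      = (univ.filter fun i : Fin n => (u, i) ∈ F) ×ˢ
        (univ.filter fun j : Fin n => (v, j) ∉ F) := by
    ext ⟨i, j⟩
    simp only [Finset.mem_filter, Finset.mem_univ, true_and, Finset.mem_product, adjH]
    constructor
    · rintro ⟨h1, h2, -⟩; exact ⟨h1, h2⟩
    · rintro ⟨h1, h2⟩; exact ⟨h1, h2, Or.inr huv⟩
  rw [h, Finset.card_product, filter_not_card]; rfl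

def adjPairs : Finset (α × α) := univ.filter fun p => G.Adj p.1 p.2

lemma adjPairs_sum (g : α × α → ℕ) :
    ∑ p ∈ adjPairs G, g p = ∑ u, ∑ v ∈ G.neighborFinset u, g (u, v) := by
  rw [adjPairs, Finset.sum_filter, Fintype.sum_prod_type]
  refine Finset.sum_congr rfl fun u _ => ?_
  rw [SimpleGraph.neighborFinset_eq_filter, Finset.sum_filter]

lemma B_ge_parts (F : Finset (α × Fin n)) :
    (∑ u, xC n F u * (n - xC n F u)) +
      ∑ p ∈ adjPairs G, xC n F p.1 * (n - xC n F p.2)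
      ≤ (OPF (strongProd G (completeGraph (Fin n))) F).card := by
  rw [B_eq_sum_uv, adjPairs_sum, ← Finset.sum_add_distrib]
  refine Finset.sum_le_sum fun u _ => ?_
  have h1 : ∑ v, Nuv G n F u v = Nuv G n F u u + ∑ v ∈ univ.erase u, Nuv G n F u v :=
    (Finset.add_sum_erase univ _ (Finset.mem_univ u)).symm
  rw [h1, Nuu]
  refine Nat.add_le_add_left ?_ _
  have h2 : ∑ v ∈ G.neighborFinset u, xC n F u * (n - xC n F v)
      = ∑ v ∈ G.neighborFinset u, Nuv G n F u v := by
    refine Finset.sum_congr rfl fun v hv => ?_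
    rw [Nuv_adj G n F ((SimpleGraph.mem_neighborFinset G u v).1 hv)]
  rw [h2]
  refine Finset.sum_le_sum_of_subset ?_
  intro v hv
  rw [SimpleGraph.mem_neighborFinset] at hv
  exact Finset.mem_erase.2 ⟨hv.ne', Finset.mem_univ v⟩

end counting2
end Aux3

namespace Aux3
section counting3
variable {α : Type*} [DecidableEq α] [Fintype α] (G : SimpleGraph α) [DecidableRel G.Adj] (n : ℕ)

def outF (F : Finset (α × Fin n)) (y : α × Fin n) : ℕ :=
  (univ.filter fun z => z ∉ F ∧ (strongProd G (completeGraph (Fin n))).Adj y z).card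

lemma B_eq_sum_out (F : Finset (α × Fin n)) :
    (OPF (strongProd G (completeGraph (Fin n))) F).card = ∑ y ∈ F, outF G n F y := by
  rw [OPF, Finset.card_filter]
  have h : ∀ y : α × Fin n,
      (∑ z : α × Fin n, if y ∈ F ∧ z ∉ F ∧ (strongProd G (completeGraph (Fin n))).Adj y z
        then 1 else 0) = if y ∈ F then outF G n F y else 0 := by
    intro y
    by_cases hy : y ∈ F
    · simp only [hy, true_and, if_true, outF, Finset.card_filter]
    · simp [hy]
  rw [Fintype.sum_prod_type]
  trans (∑ y : α × Fin n, if y ∈ F then outF G n F y else 0)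
  · exact Finset.sum_congr rfl fun y _ => h y
  · rw [Finset.sum_ite_mem, Finset.univ_inter]

def loF (F : Finset (α × Fin n)) (u : α) (i : Fin n) (v : α) : ℕ :=
  (univ.filter fun j : Fin n =>
    (v, j) ∉ F ∧ (strongProd G (completeGraph (Fin n))).Adj (u, i) (v, j)).card

lemma out_eq_sum_layers (F : Finset (α × Fin n)) (u : α) (i : Fin n) :
    outF G n F (u, i) = ∑ v, loF G n F u i v := by
  rw [outF, Finset.card_filter, Fintype.sum_prod_type]
  refine Finset.sum_congr rfl fun v _ => ?_
  rw [loF, Finset.card_filter]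

lemma lo_self_ge (F : Finset (α × Fin n)) (u : α) (i : Fin n) (hy : (u, i) ∈ F) :
    n - xC n F u ≤ loF G n F u i u := by
  rw [loF, ← filter_not_card n F u]
  refine Finset.card_le_card fun j hj => ?_
  simp only [Finset.mem_filter, Finset.mem_univ, true_and] at hj ⊢
  refine ⟨hj, ?_⟩
  rw [adjH]
  refine Or.inl ⟨rfl, ?_⟩
  intro hij
  have hij2 : i = j := hij
  exact hj (hij2 ▸ hy)

lemma lo_adj_ge (F : Finset (α × Fin n)) (u : α) (i : Fin n) {v : α} (hv : G.Adj u v) :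
    n - xC n F v ≤ loF G n F u i v := by
  rw [loF, ← filter_not_card n F v]
  refine Finset.card_le_card fun j hj => ?_
  simp only [Finset.mem_filter, Finset.mem_univ, true_and] at hj ⊢
  exact ⟨hj, (adjH G n _ _).2 (Or.inr hv)⟩

/-- degree of a vertex of the strong product, counted as a filter -/
def degH (y : α × Fin n) : ℕ :=
  (univ.filter fun z => (strongProd G (completeGraph (Fin n))).Adj y z).card

lemma degH_eq (u : α) (i : Fin n) :
    degH G n (u, i) = (n - 1) + (G.neighborFinset u).card * n := by
  rw [degH]
  have h : (univ.filter fun z : α × Fin n =>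
      (strongProd G (completeGraph (Fin n))).Adj (u, i) z)
      = ({u} ×ˢ ({i}ᶜ : Finset (Fin n))) ∪ ((G.neighborFinset u) ×ˢ univ) := by
    ext ⟨v, j⟩
    simp only [Finset.mem_filter, Finset.mem_univ, true_and, Finset.mem_union,
      Finset.mem_product, Finset.mem_singleton, Finset.mem_compl,
      SimpleGraph.mem_neighborFinset, and_true, adjH]
    constructor
    · rintro (⟨h1, h2⟩ | h)
      · exact Or.inl ⟨h1.symm, fun hj => h2 hj.symm⟩
      · exact Or.inr h
    · rintro (⟨h1, h2⟩ | h)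
      · exact Or.inl ⟨h1.symm, fun hj => h2 hj.symm⟩
      · exact Or.inr h
  rw [h, Finset.card_union_of_disjoint, Finset.card_product, Finset.card_product,
    Finset.card_singleton, Finset.card_compl, Finset.card_singleton, Fintype.card_fin,
    Finset.card_univ, Fintype.card_fin, one_mul]
  · rw [Finset.disjoint_left]
    rintro ⟨v, j⟩ hv hw
    simp only [Finset.mem_product, Finset.mem_singleton] at hv
    simp only [Finset.mem_product, SimpleGraph.mem_neighborFinset] at hw
    exact G.irrefl (hv.1 ▸ hw.1)

lemma degH_split (F : Finset (α × Fin n)) (y : α × Fin n) :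
    degH G n y = outF G n F y +
      (univ.filter fun z => z ∈ F ∧ (strongProd G (completeGraph (Fin n))).Adj y z).card := by
  rw [degH, outF, Finset.card_filter, Finset.card_filter, Finset.card_filter,
    ← Finset.sum_add_distrib]
  refine Finset.sum_congr rfl fun z _ => ?_
  by_cases hz : z ∈ F <;> by_cases ha : (strongProd G (completeGraph (Fin n))).Adj y z <;>
    simp only [completeGraph] at ha ⊢ <;> simp [hz, ha]

lemma inF_le (F : Finset (α × Fin n)) (y : α × Fin n) (hy : y ∈ F) :
    (univ.filter fun z => z ∈ F ∧ (strongProd G (completeGraph (Fin n))).Adj y z).card + 1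
      ≤ F.card := by
  have h : (univ.filter fun z => z ∈ F ∧ (strongProd G (completeGraph (Fin n))).Adj y z)
      ⊆ F.erase y := by
    intro z hz
    simp only [Finset.mem_filter, Finset.mem_univ, true_and] at hz
    exact Finset.mem_erase.2 ⟨fun hzy => (strongProd G (completeGraph (Fin n))).irrefl
      (hzy ▸ hz.2).symm, hz.1⟩
  have h2 := Finset.card_le_card h
  have h3 : (F.erase y).card + 1 = F.card := by
    rw [Finset.card_erase_of_mem hy]
    exact Nat.succ_pred_eq_of_pos (Finset.card_pos.2 ⟨y, hy⟩)
  omega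

lemma OPF_compl_card {W : Type*} [Fintype W] [DecidableEq W] (K : SimpleGraph W)
    [DecidableRel K.Adj] (F : Finset W) : (OPF K Fᶜ).card = (OPF K F).card := by
  refine Finset.card_bij (fun p _ => (p.2, p.1)) ?_ ?_ ?_
  · rintro ⟨a, b⟩ hp
    simp only [OPF, Finset.mem_filter, Finset.mem_univ, true_and, Finset.mem_compl,
      not_not] at hp ⊢
    exact ⟨hp.2.1, hp.1, hp.2.2.symm⟩
  · rintro ⟨a, b⟩ ha ⟨c, d⟩ hc h
    simp only [Prod.mk.injEq] at h
    simp [Prod.ext_iff, h.1, h.2]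
  · rintro ⟨a, b⟩ hp
    simp only [OPF, Finset.mem_filter, Finset.mem_univ, true_and] at hp
    refine ⟨(b, a), ?_, rfl⟩
    simp only [OPF, Finset.mem_filter, Finset.mem_univ, true_and, Finset.mem_compl, not_not]
    exact ⟨hp.2.1, hp.1, hp.2.2.symm⟩

end counting3
end Aux3

namespace Aux3

lemma nat_aux1 (a b N : ℕ) (ha : a ≤ N) (hb : b ≤ N) : N * (a - b) ≤ a * (N - b) := by
  rcases le_total a b with h | h
  · simp [Nat.sub_eq_zero_of_le h]
  · obtain ⟨c, rfl⟩ := Nat.exists_eq_add_of_le h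
    obtain ⟨e, rfl⟩ := Nat.exists_eq_add_of_le hb
    have h2 : b + c - b = c := by omega
    have h3 : (b + c) * (b + e - b) = (b + c) * e := by congr 1; omega
    rw [h2, h3]
    have hce : c ≤ e := by omega
    calc (b + e) * c = b * c + e * c := by ring
      _ ≤ b * e + e * c := by
          have := Nat.mul_le_mul_left b hce
          omega
      _ = (b + c) * e := by ring

lemma nat_aux2 (x y : ℕ) (hx : 1 ≤ x) (hy : 1 ≤ y) : x + y ≤ x * y + 1 := by
  obtain ⟨a, rfl⟩ := Nat.exists_eq_add_of_le hx
  obtain ⟨b, rfl⟩ := Nat.exists_eq_add_of_le hy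
  have : (1 + a) * (1 + b) = 1 + a + b + a * b := by ring
  omega

lemma nat_aux3 (s T : ℕ) (h3 : 3 ≤ s) (hsT : s + 3 ≤ T) : 3 * T ≤ s * (T - s) + 9 := by
  obtain ⟨a, rfl⟩ := Nat.exists_eq_add_of_le h3
  have hm : 3 ≤ T - (3 + a) := by omega
  obtain ⟨b, hb⟩ := Nat.exists_eq_add_of_le hm
  have hT : T = (3 + a) + (3 + b) := by omega
  subst hT
  have h4 : (3 + a) + (3 + b) - (3 + a) = 3 + b := by omega
  rw [h4]
  have : (3 + a) * (3 + b) = 9 + 3 * a + 3 * b + a * b := by ring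
  omega

section coarea
variable {α : Type*} [DecidableEq α] [Fintype α] (G : SimpleGraph α) [DecidableRel G.Adj] (n : ℕ)

lemma coarea (F : Finset (α × Fin n)) (R : ℕ) (hR : ∀ u, xC n F u ≤ R) (d : ℕ)
    (hcut : ∀ D : Finset α, D.Nonempty → D ≠ univ → d ≤ (OPF G D).card)
    (hD : ∀ t, 1 ≤ t → t ≤ R →
      (univ.filter fun u => t ≤ xC n F u).Nonempty ∧
        (univ.filter fun u => t ≤ xC n F u) ≠ univ) :
    R * d ≤ ∑ p ∈ adjPairs G, (xC n F p.1 - xC n F p.2) := by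
  have hKt : ∀ t, (OPF G (univ.filter fun u => t ≤ xC n F u)).card
      = ∑ p ∈ adjPairs G, (if t ≤ xC n F p.1 ∧ ¬ t ≤ xC n F p.2 then 1 else 0) := by
    intro t
    rw [OPF, Finset.card_filter, adjPairs, Finset.sum_filter]
    refine Finset.sum_congr rfl fun p _ => ?_
    by_cases h1 : t ≤ xC n F p.1 <;> by_cases h2 : t ≤ xC n F p.2 <;>
      by_cases h3 : G.Adj p.1 p.2 <;> simp [h1, h2, h3]
  have key : ∑ t ∈ Finset.Icc 1 R, (OPF G (univ.filter fun u => t ≤ xC n F u)).card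
      = ∑ p ∈ adjPairs G, (xC n F p.1 - xC n F p.2) := by
    calc ∑ t ∈ Finset.Icc 1 R, (OPF G (univ.filter fun u => t ≤ xC n F u)).card
        = ∑ t ∈ Finset.Icc 1 R, ∑ p ∈ adjPairs G,
            (if t ≤ xC n F p.1 ∧ ¬ t ≤ xC n F p.2 then 1 else 0) := by
          exact Finset.sum_congr rfl fun t _ => hKt t
      _ = ∑ p ∈ adjPairs G, ∑ t ∈ Finset.Icc 1 R,
            (if t ≤ xC n F p.1 ∧ ¬ t ≤ xC n F p.2 then 1 else 0) := Finset.sum_comm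
      _ = ∑ p ∈ adjPairs G, (xC n F p.1 - xC n F p.2) := by
          refine Finset.sum_congr rfl fun p _ => ?_
          rw [← Finset.card_filter]
          have hflt : (Finset.Icc 1 R).filter
              (fun t => t ≤ xC n F p.1 ∧ ¬ t ≤ xC n F p.2)
              = Finset.Ioc (xC n F p.2) (xC n F p.1) := by
            ext t
            simp only [Finset.mem_filter, Finset.mem_Icc, Finset.mem_Ioc, not_le]
            have := hR p.1
            omega
          rw [hflt, Nat.card_Ioc]
  have hge : R * d ≤ ∑ t ∈ Finset.Icc 1 R, (OPF G (univ.filter fun u => t ≤ xC n F u)).card := by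
    have hall : ∀ t ∈ Finset.Icc 1 R, d ≤ (OPF G (univ.filter fun u => t ≤ xC n F u)).card := by
      intro t ht
      rw [Finset.mem_Icc] at ht
      exact hcut _ (hD t ht.1 ht.2).1 (hD t ht.1 ht.2).2
    have h1 := Finset.sum_le_sum hall
    have h2 : ∑ _t ∈ Finset.Icc 1 R, d = R * d := by
      rw [Finset.sum_const, Nat.card_Icc, smul_eq_mul]
      have h19 : R + 1 - 1 = R := by omega
      rw [h19]
    rw [h2] at h1
    exact h1
  exact key ▸ hge

lemma adjPairs_swap (g : α → α → ℕ) :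
    ∑ p ∈ adjPairs G, g p.1 p.2 = ∑ p ∈ adjPairs G, g p.2 p.1 := by
  refine Finset.sum_bij' (fun p _ => (p.2, p.1)) (fun p _ => (p.2, p.1)) ?_ ?_ ?_ ?_ ?_
  · rintro ⟨a, b⟩ hp
    simp only [adjPairs, Finset.mem_filter, Finset.mem_univ, true_and] at hp ⊢
    exact hp.symm
  · rintro ⟨a, b⟩ hp
    simp only [adjPairs, Finset.mem_filter, Finset.mem_univ, true_and] at hp ⊢
    exact hp.symm
  · rintro ⟨a, b⟩ _; rfl
  · rintro ⟨a, b⟩ _; rfl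
  · rintro ⟨a, b⟩ _; rfl

end coarea

section main
variable {α : Type*} [DecidableEq α] [Fintype α] (G : SimpleGraph α) [DecidableRel G.Adj] (n : ℕ)

lemma mainSide (hn : 4 ≤ n) (d : ℕ) (hd : 1 ≤ d)
    (hdeg : ∀ u, d ≤ (G.neighborFinset u).card)
    (hcut : ∀ D : Finset α, D.Nonempty → D ≠ univ → d ≤ (OPF G D).card)
    (F : Finset (α × Fin n)) (hzero : ∃ u, xC n F u = 0) (hlt : ∀ u, xC n F u ≤ n - 1)
    (hs : 3 ≤ F.card) :
    3 * n * d + 3 * n - 9 ≤ (OPF (strongProd G (completeGraph (Fin n))) F).card := by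
  by_cases hsmall : F.card + 3 ≤ n * (1 + d)
  · -- small side: per-vertex degree bound
    have hout : ∀ y ∈ F, n * (1 + d) - F.card ≤ outF G n F y := by
      rintro ⟨u, i⟩ hy
      have h1 := degH_split G n F (u, i)
      have h2 := inF_le G n F (u, i) hy
      have h3 := degH_eq G n u i
      have h4 : d * n ≤ (G.neighborFinset u).card * n := Nat.mul_le_mul_right n (hdeg u)
      have h5 : n * (1 + d) = n + d * n := by ring
      omega
    have hB : F.card * (n * (1 + d) - F.card)
        ≤ (OPF (strongProd G (completeGraph (Fin n))) F).card := by
      rw [B_eq_sum_out]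
      calc F.card * (n * (1 + d) - F.card) = ∑ _y ∈ F, (n * (1 + d) - F.card) := by
            rw [Finset.sum_const, smul_eq_mul]
        _ ≤ ∑ y ∈ F, outF G n F y := Finset.sum_le_sum hout
    have harith := nat_aux3 F.card (n * (1 + d)) hs hsmall
    have hT : 3 * (n * (1 + d)) = 3 * n * d + 3 * n := by ring
    omega
  · push_neg at hsmall
    by_cases hM : ∀ u, xC n F u + 2 ≤ n
    · -- middle: all layers miss at least 2
      have hout : ∀ y ∈ F, 2 * (1 + d) ≤ outF G n F y := by
        rintro ⟨u, i⟩ hy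
        rw [out_eq_sum_layers]
        have hsub : insert u (G.neighborFinset u) ⊆ univ := Finset.subset_univ _
        have h0 : ∑ v ∈ insert u (G.neighborFinset u), loF G n F u i v
            ≤ ∑ v, loF G n F u i v :=
          Finset.sum_le_sum_of_subset hsub
        have h1 : ∑ v ∈ insert u (G.neighborFinset u), loF G n F u i v
            = loF G n F u i u + ∑ v ∈ G.neighborFinset u, loF G n F u i v := by
          rw [Finset.sum_insert (SimpleGraph.notMem_neighborFinset_self G u)]
        have h2 : 2 ≤ loF G n F u i u := by
          have := lo_self_ge G n F u i hy
          have := hM u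
          omega
        have h3 : 2 * (G.neighborFinset u).card
            ≤ ∑ v ∈ G.neighborFinset u, loF G n F u i v := by
          calc 2 * (G.neighborFinset u).card = ∑ _v ∈ G.neighborFinset u, 2 := by
                rw [Finset.sum_const, smul_eq_mul, Nat.mul_comm]
            _ ≤ _ := by
                refine Finset.sum_le_sum fun v hv => ?_
                have := lo_adj_ge G n F u i ((SimpleGraph.mem_neighborFinset G u v).1 hv)
                have := hM v
                omega
        have h4 := hdeg u
        have : 2 * (1 + d) ≤ 2 + 2 * (G.neighborFinset u).card := by omega
        omega
      have hB : F.card * (2 * (1 + d))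
          ≤ (OPF (strongProd G (completeGraph (Fin n))) F).card := by
        rw [B_eq_sum_out]
        calc F.card * (2 * (1 + d)) = ∑ _y ∈ F, 2 * (1 + d) := by
              rw [Finset.sum_const, smul_eq_mul]
          _ ≤ ∑ y ∈ F, outF G n F y := Finset.sum_le_sum hout
      -- arithmetic: s ≥ n(1+d) - 2
      have hsge : n * (1 + d) ≤ F.card + 3 := le_of_lt hsmall
      have harith : 3 * n * d + 3 * n ≤ F.card * (2 * (1 + d)) + 9 := by
        nlinarith [hsge, hd, hn, Nat.zero_le (F.card * d)]
      omega
    · -- some layer has exactly n-1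
      push_neg at hM
      obtain ⟨u1, hu1⟩ := hM
      have hu1' : xC n F u1 = n - 1 := by have := hlt u1; omega
      obtain ⟨u0, hu0⟩ := hzero
      have hdiag : F.card ≤ ∑ u, xC n F u * (n - xC n F u) := by
        rw [card_layers n F]
        refine Finset.sum_le_sum fun u _ => ?_
        have h1 := hlt u
        have h2 : 1 ≤ n - xC n F u := by omega
        calc xC n F u = xC n F u * 1 := by ring
          _ ≤ xC n F u * (n - xC n F u) := Nat.mul_le_mul_left _ h2
      have hDt : ∀ t, 1 ≤ t → t ≤ n - 1 →
          (univ.filter fun u => t ≤ xC n F u).Nonempty ∧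
            (univ.filter fun u => t ≤ xC n F u) ≠ univ := by
        intro t ht1 ht2
        constructor
        · exact ⟨u1, by simp only [Finset.mem_filter, Finset.mem_univ, true_and]; omega⟩
        · intro huniv
          have hm0 : u0 ∈ univ.filter fun u => t ≤ xC n F u := by
            rw [huniv]; exact Finset.mem_univ u0
          simp only [Finset.mem_filter] at hm0
          omega
      have hco := coarea G n F (n - 1) (fun u => hlt u) d hcut hDt
      have hadjS : (n - 1) * d * n ≤ ∑ p ∈ adjPairs G, xC n F p.1 * (n - xC n F p.2) := by
        have hpt : ∀ p ∈ adjPairs G,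
            n * (xC n F p.1 - xC n F p.2) ≤ xC n F p.1 * (n - xC n F p.2) := by
          intro p _
          exact nat_aux1 _ _ n (by have := hlt p.1; omega) (by have := hlt p.2; omega)
        calc (n - 1) * d * n = n * ((n - 1) * d) := by ring
          _ ≤ n * ∑ p ∈ adjPairs G, (xC n F p.1 - xC n F p.2) :=
              Nat.mul_le_mul_left n hco
          _ = ∑ p ∈ adjPairs G, n * (xC n F p.1 - xC n F p.2) := by
              rw [Finset.mul_sum]
          _ ≤ _ := Finset.sum_le_sum hpt
      have hB := B_ge_parts G n F
      have harith : 3 * n * d + 3 * n ≤ F.card + (n - 1) * d * n + 9 := by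
        obtain ⟨k, rfl⟩ : ∃ k, n = k + 1 := ⟨n - 1, by omega⟩
        obtain ⟨m, rfl⟩ : ∃ m, k = m + 3 := ⟨k - 3, by omega⟩
        have hsimp : (m + 3 + 1 - 1) = m + 3 := by omega
        rw [hsimp]
        nlinarith [hs, hd, Nat.zero_le (m * d), Nat.zero_le (m * m * d)]
      omega

end main
end Aux3

namespace Aux3
section main2
variable {α : Type*} [DecidableEq α] [Fintype α] (G : SimpleGraph α) [DecidableRel G.Adj] (n : ℕ)

lemma adjPairs_card (G : SimpleGraph α) [DecidableRel G.Adj] :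
    (adjPairs G).card = 2 * G.edgeFinset.card := by
  rw [SimpleGraph.two_mul_card_edgeFinset, adjPairs]

lemma mainAll (hn : 4 ≤ n) (d : ℕ) (hd : 1 ≤ d)
    (hdeg : ∀ u, d ≤ (G.neighborFinset u).card)
    (hcut : ∀ D : Finset α, D.Nonempty → D ≠ univ → d ≤ (OPF G D).card)
    (hA : 3 * n * d + 3 * n - 9 ≤ n ^ 2 * d)
    (hB : 3 * n * d + 3 * n - 9 ≤ (n - 1) * (Fintype.card α + 2 * G.edgeFinset.card))
    (F : Finset (α × Fin n)) (hF : 3 ≤ F.card) (hFc : 3 ≤ Fᶜ.card) :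
    3 * n * d + 3 * n - 9 ≤ (OPF (strongProd G (completeGraph (Fin n))) F).card := by
  by_cases hz : ∃ u, xC n F u = 0
  · by_cases hfull : ∃ u, xC n F u = n
    · -- full and empty layers: coarea over [1, n]
      obtain ⟨u0, hu0⟩ := hz
      obtain ⟨u1, hu1⟩ := hfull
      have hDt : ∀ t, 1 ≤ t → t ≤ n →
          (univ.filter fun u => t ≤ xC n F u).Nonempty ∧
            (univ.filter fun u => t ≤ xC n F u) ≠ univ := by
        intro t ht1 ht2
        constructor
        · exact ⟨u1, by simp only [Finset.mem_filter, Finset.mem_univ, true_and]; omega⟩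
        · intro huniv
          have hm0 : u0 ∈ univ.filter fun u => t ≤ xC n F u := by
            rw [huniv]; exact Finset.mem_univ u0
          simp only [Finset.mem_filter] at hm0
          omega
      have hco := coarea G n F n (fun u => xC_le n F u) d hcut hDt
      have hadjS : n * (n * d) ≤ ∑ p ∈ adjPairs G, xC n F p.1 * (n - xC n F p.2) := by
        have hpt : ∀ p ∈ adjPairs G,
            n * (xC n F p.1 - xC n F p.2) ≤ xC n F p.1 * (n - xC n F p.2) := by
          intro p _
          exact nat_aux1 _ _ n (xC_le n F p.1) (xC_le n F p.2)
        calc n * (n * d) ≤ n * ∑ p ∈ adjPairs G, (xC n F p.1 - xC n F p.2) :=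
              Nat.mul_le_mul_left n hco
          _ = ∑ p ∈ adjPairs G, n * (xC n F p.1 - xC n F p.2) := by rw [Finset.mul_sum]
          _ ≤ _ := Finset.sum_le_sum hpt
      have hB2 := B_ge_parts G n F
      have hsq : n ^ 2 * d = n * (n * d) := by ring
      omega
    · -- empty layer, no full layer: mainSide on F
      push_neg at hfull
      refine mainSide G n hn d hd hdeg hcut F hz (fun u => ?_) hF
      have h1 := xC_le n F u
      have h2 := hfull u
      omega
  · push_neg at hz
    by_cases hfull : ∃ u, xC n F u = n
    · -- no empty layer, some full layer: mainSide on Fᶜ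
      obtain ⟨u1, hu1⟩ := hfull
      have hres := mainSide G n hn d hd hdeg hcut Fᶜ ⟨u1, by rw [xC_compl, hu1]; omega⟩
        (fun u => by
          have h1 := xC_compl n F u
          have h2 := hz u
          have h3 := xC_le n F u
          have h4 : xC n F u ≠ 0 := h2
          omega) hFc
      rwa [OPF_compl_card] at hres
    · -- all layers mixed
      push_neg at hfull
      have hmix : ∀ u, 1 ≤ xC n F u ∧ xC n F u ≤ n - 1 := by
        intro u
        have h1 := xC_le n F u
        have h2 := hz u
        have h3 := hfull u
        constructor <;> omega
      have hdiag : Fintype.card α * (n - 1) ≤ ∑ u, xC n F u * (n - xC n F u) := by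
        calc Fintype.card α * (n - 1) = ∑ _u : α, (n - 1) := by
              rw [Finset.sum_const, smul_eq_mul, Finset.card_univ]
          _ ≤ _ := by
              refine Finset.sum_le_sum fun u _ => ?_
              have h1 := (hmix u).1
              have h2 := (hmix u).2
              have h3 := xC_le n F u
              have h4 := nat_aux2 (xC n F u) (n - xC n F u) h1 (by omega)
              omega
      have hswap := adjPairs_swap G (fun a b => xC n F a * (n - xC n F b))
      have htwo : ∑ p ∈ adjPairs G, (xC n F p.1 * (n - xC n F p.2)
            + xC n F p.2 * (n - xC n F p.1))
          = ∑ p ∈ adjPairs G, xC n F p.1 * (n - xC n F p.2)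
            + ∑ p ∈ adjPairs G, xC n F p.2 * (n - xC n F p.1) := by
        rw [Finset.sum_add_distrib]
      have hpt : ∀ p ∈ adjPairs G, 2 * (n - 1) ≤ xC n F p.1 * (n - xC n F p.2)
            + xC n F p.2 * (n - xC n F p.1) := by
        intro p _
        have h1 := (hmix p.1).1
        have h2 := (hmix p.1).2
        have h1' := (hmix p.2).1
        have h2' := (hmix p.2).2
        have h3 := xC_le n F p.1
        have h3' := xC_le n F p.2
        have h4 := nat_aux2 (xC n F p.1) (n - xC n F p.2) h1 (by omega)
        have h5 := nat_aux2 (xC n F p.2) (n - xC n F p.1) h1' (by omega)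
        omega
      have hlower : (adjPairs G).card * (2 * (n - 1))
          ≤ ∑ p ∈ adjPairs G, (xC n F p.1 * (n - xC n F p.2)
            + xC n F p.2 * (n - xC n F p.1)) := by
        calc (adjPairs G).card * (2 * (n - 1))
            = ∑ _p ∈ adjPairs G, 2 * (n - 1) := by rw [Finset.sum_const, smul_eq_mul]
          _ ≤ _ := Finset.sum_le_sum hpt
      have hcard := adjPairs_card G
      have hadjS : (n - 1) * (2 * G.edgeFinset.card)
          ≤ ∑ p ∈ adjPairs G, xC n F p.1 * (n - xC n F p.2) := by
        have hcomb : 2 * G.edgeFinset.card * (2 * (n - 1))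
            ≤ 2 * ∑ p ∈ adjPairs G, xC n F p.1 * (n - xC n F p.2) := by
          rw [← hcard]
          calc (adjPairs G).card * (2 * (n - 1)) ≤ _ := hlower
            _ = 2 * ∑ p ∈ adjPairs G, xC n F p.1 * (n - xC n F p.2) := by
              rw [htwo, ← hswap]; ring
        nlinarith [hcomb]
      have hB2 := B_ge_parts G n F
      have hexp : (n - 1) * (Fintype.card α + 2 * G.edgeFinset.card)
          = (n - 1) * Fintype.card α + (n - 1) * (2 * G.edgeFinset.card) := by
        rw [Nat.mul_add]
      have hcm : Fintype.card α * (n - 1) = (n - 1) * Fintype.card α := Nat.mul_comm _ _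
      omega

end main2
end Aux3

namespace Aux3

lemma ncard_edgeBoundary_eq {W : Type*} [Fintype W] [DecidableEq W] (K : SimpleGraph W)
    [DecidableRel K.Adj] (F : Finset W) :
    (edgeBoundary K (↑F : Set W)).ncard = (OPF K F).card := by
  have himg : edgeBoundary K (↑F : Set W)
      = (fun p : W × W => s(p.1, p.2)) '' (OPF K F : Set (W × W)) := by
    ext e
    constructor
    · rintro ⟨he, u, v, rfl, hu, hv⟩
      refine ⟨(u, v), ?_, rfl⟩
      simp only [OPF, Finset.coe_filter, Set.mem_setOf_eq, Finset.mem_univ, true_and]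
      exact ⟨hu, hv, (SimpleGraph.mem_edgeSet K).1 he⟩
    · rintro ⟨⟨u, v⟩, hp, rfl⟩
      simp only [OPF, Finset.coe_filter, Set.mem_setOf_eq, Finset.mem_univ, true_and] at hp
      exact ⟨(SimpleGraph.mem_edgeSet K).2 hp.2.2, u, v, rfl, hp.1, hp.2.1⟩
  rw [himg, Set.ncard_image_of_injOn, Set.ncard_coe_finset]
  rintro ⟨u, v⟩ hu ⟨a, b⟩ ha hab
  simp only [OPF, Finset.coe_filter, Set.mem_setOf_eq, Finset.mem_univ, true_and] at hu ha
  simp only [Sym2.eq, Sym2.rel_iff', Prod.mk.injEq, Prod.swap_prod_mk] at hab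
  rcases hab with ⟨h1, h2⟩ | ⟨h1, h2⟩
  · simp [Prod.ext_iff, h1, h2]
  · exact absurd ha.1 (h2 ▸ hu.2.1)

lemma not_reachable_of_boundary_subset {W : Type*} (K : SimpleGraph W) (C : Set W)
    (S : Set (Sym2 W)) (hS : edgeBoundary K C ⊆ S) {x y : W} (hx : x ∈ C) (hy : y ∉ C) :
    ¬ (K.deleteEdges S).Reachable x y := by
  rintro ⟨p⟩
  obtain ⟨d, -, hd1, hd2⟩ := p.exists_boundary_dart C hx hy
  have hadj := d.adj
  rw [SimpleGraph.deleteEdges_adj] at hadj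
  exact hadj.2 (hS ⟨(SimpleGraph.mem_edgeSet K).2 hadj.1, d.fst, d.snd, rfl, hd1, hd2⟩)

lemma edgeBoundary_subset_edgeSet {W : Type*} (K : SimpleGraph W) (C : Set W) :
    edgeBoundary K C ⊆ K.edgeSet := fun _ he => he.1

lemma not_connected_of_boundary {W : Type*} (K : SimpleGraph W) (C : Set W)
    {x y : W} (hx : x ∈ C) (hy : y ∉ C) :
    ¬ (K.deleteEdges (edgeBoundary K C)).Connected := by
  intro hconn
  exact not_reachable_of_boundary_subset K C _ (le_refl _) hx hy (hconn.preconnected x y)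

lemma deg_eq_card {W : Type*} [Fintype W] (K : SimpleGraph W) [DecidableRel K.Adj] (u : W) :
    deg K u = (K.neighborFinset u).card := by
  rw [deg, SimpleGraph.neighborFinset_def, Set.ncard_eq_toFinset_card']

lemma numEdges_eq {W : Type*} [Fintype W] [DecidableEq W] (K : SimpleGraph W)
    [DecidableRel K.Adj] : numEdges K = K.edgeFinset.card := by
  rw [numEdges, ← SimpleGraph.coe_edgeFinset, Set.ncard_coe_finset]

lemma minDeg_le {W : Type*} (K : SimpleGraph W) (u : W) : minDeg K ≤ deg K u :=
  Nat.sInf_le ⟨u, rfl⟩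

lemma exists_minDeg {W : Type*} [Nonempty W] (K : SimpleGraph W) :
    ∃ u, deg K u = minDeg K := by
  have hne : {k | ∃ v, deg K v = k}.Nonempty := ⟨deg K (Classical.arbitrary W), _, rfl⟩
  exact Nat.sInf_mem hne

end Aux3

namespace Aux3

lemma exists_component_side {W : Type*} [Fintype W] [DecidableEq W] [Nonempty W]
    (K : SimpleGraph W) (S : Set (Sym2 W)) (hr : IsKRestrictedEdgeCut K 3 S) :
    ∃ F : Finset W, 3 ≤ F.card ∧ 3 ≤ Fᶜ.card ∧ edgeBoundary K (↑F : Set W) ⊆ S := by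
  classical
  set K' := K.deleteEdges S with hK'
  have hnc : ¬ K'.Connected := hr.2.1
  rw [SimpleGraph.connected_iff] at hnc
  push_neg at hnc
  have hnp : ¬ K'.Preconnected := fun hp => (hnc hp).false (Classical.arbitrary W)
  rw [SimpleGraph.Preconnected] at hnp
  push_neg at hnp
  obtain ⟨a, b, hab⟩ := hnp
  set c := K'.connectedComponentMk a with hc
  refine ⟨c.supp.toFinset, ?_, ?_, ?_⟩
  · rw [← Set.ncard_eq_toFinset_card']
    exact hr.2.2 c
  · have hsub : (K'.connectedComponentMk b).supp.toFinset ⊆ (c.supp.toFinset)ᶜ := by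
      intro z hz
      rw [Set.mem_toFinset, SimpleGraph.ConnectedComponent.mem_supp_iff] at hz
      rw [Finset.mem_compl, Set.mem_toFinset, SimpleGraph.ConnectedComponent.mem_supp_iff]
      intro hzc
      apply hab
      have h1 : K'.connectedComponentMk b = c := hz ▸ hzc
      exact (SimpleGraph.ConnectedComponent.eq.1 h1.symm)
    calc 3 ≤ (K'.connectedComponentMk b).supp.ncard := hr.2.2 _
      _ = (K'.connectedComponentMk b).supp.toFinset.card := Set.ncard_eq_toFinset_card' _
      _ ≤ _ := Finset.card_le_card hsub
  · intro e he
    obtain ⟨hedge, x, y, rfl, hx, hy⟩ := he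
    by_contra heS
    have hadj : K'.Adj x y := by
      rw [hK', SimpleGraph.deleteEdges_adj]
      exact ⟨(SimpleGraph.mem_edgeSet K).1 hedge, heS⟩
    apply hy
    have hx' : K'.connectedComponentMk x = c := by
      have hxx : x ∈ c.supp.toFinset := by exact_mod_cast hx
      rwa [Set.mem_toFinset, SimpleGraph.ConnectedComponent.mem_supp_iff] at hxx
    have hy' : K'.connectedComponentMk y = c := by
      rw [← hx']
      exact SimpleGraph.ConnectedComponent.connectedComponentMk_eq_of_adj hadj.symm
    show y ∈ (↑c.supp.toFinset : Set W)
    simp only [Finset.mem_coe, Set.mem_toFinset, SimpleGraph.ConnectedComponent.mem_supp_iff]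
    exact hy'

end Aux3

namespace Aux3
section cutcons
variable {α : Type*} [DecidableEq α] [Fintype α] (G : SimpleGraph α) [DecidableRel G.Adj] (n : ℕ)

lemma keep_out (X : Set (α × Fin n)) {z w : α × Fin n} (hz : z ∉ X) (hw : w ∉ X) :
    s(z, w) ∉ edgeBoundary (strongProd G (completeGraph (Fin n))) X := by
  rintro ⟨-, u, v, he, hu, hv⟩
  rw [Sym2.eq_iff] at he
  rcases he with ⟨h1, h2⟩ | ⟨h1, h2⟩
  · exact hz (h1.symm ▸ hu)
  · exact hw (h2.symm ▸ hu)

lemma keep_in (X : Set (α × Fin n)) {z w : α × Fin n} (hz : z ∈ X) (hw : w ∈ X) :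
    s(z, w) ∉ edgeBoundary (strongProd G (completeGraph (Fin n))) X := by
  rintro ⟨-, u, v, he, hu, hv⟩
  rw [Sym2.eq_iff] at he
  rcases he with ⟨h1, h2⟩ | ⟨h1, h2⟩
  · exact hv (h2 ▸ hw)
  · exact hv (h1 ▸ hz)

lemma boundary_is_cut (hn : 4 ≤ n) [Nonempty α] (d : ℕ) (hd : 1 ≤ d)
    (hdeg : ∀ u, d ≤ (G.neighborFinset u).card)
    (X : Set (α × Fin n)) (hX3 : X.ncard = 3)
    (hXc : ((strongProd G (completeGraph (Fin n))).induce X).Connected) :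
    IsKRestrictedEdgeCut (strongProd G (completeGraph (Fin n))) 3
      (edgeBoundary (strongProd G (completeGraph (Fin n))) X) := by
  classical
  set H := strongProd G (completeGraph (Fin n)) with hH
  set S' := edgeBoundary H X with hS'
  have hcardV : 4 ≤ Fintype.card (α × Fin n) := by
    rw [Fintype.card_prod, Fintype.card_fin]
    have h1 : 1 ≤ Fintype.card α := Fintype.card_pos
    nlinarith
  have hXne : X.Nonempty := by
    apply Set.nonempty_of_ncard_ne_zero; omega
  have hXproper : ∃ y, y ∉ X := by
    by_contra hcon
    push_neg at hcon
    have : X = Set.univ := Set.eq_univ_of_forall hcon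
    rw [this, Set.ncard_univ, Nat.card_eq_fintype_card] at hX3
    omega
  obtain ⟨x0, hx0⟩ := hXne
  obtain ⟨y0, hy0⟩ := hXproper
  refine ⟨edgeBoundary_subset_edgeSet H X, not_connected_of_boundary H X hx0 hy0, ?_⟩
  intro c
  by_cases hout : ∃ z, z ∈ c.supp ∧ z ∉ X
  · obtain ⟨z, hzc, hzX⟩ := hout
    set NF := univ.filter (fun w => H.Adj z w ∧ w ∉ X) with hNF
    have hsub : insert z NF ⊆ c.supp.toFinset := by
      intro w hw
      rw [Set.mem_toFinset]
      rcases Finset.mem_insert.1 hw with rfl | hw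
      · exact hzc
      · simp only [hNF, Finset.mem_filter, Finset.mem_univ, true_and] at hw
        have hadj : (H.deleteEdges S').Adj z w := by
          rw [SimpleGraph.deleteEdges_adj]
          exact ⟨hw.1, keep_out G n X hzX hw.2⟩
        rw [SimpleGraph.ConnectedComponent.mem_supp_iff] at hzc ⊢
        rw [← hzc]
        exact (SimpleGraph.ConnectedComponent.connectedComponentMk_eq_of_adj hadj.symm)
    have hzNF : z ∉ NF := by
      simp only [hNF, Finset.mem_filter, Finset.mem_univ, true_and]
      intro hcon
      exact H.irrefl hcon.1
    have hNFcard : degH G n z ≤ NF.card + 3 := by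
      have hgen : ∀ (P Q : Prop) [Decidable P] [Decidable Q],
          (if P then (1:ℕ) else 0) = (if P ∧ ¬Q then 1 else 0) + (if P ∧ Q then 1 else 0) := by
        intro P Q _ _
        by_cases h1 : P <;> by_cases h2 : Q <;> simp [h1, h2]
      have hsplit : degH G n z = NF.card
          + (univ.filter fun w => H.Adj z w ∧ w ∈ X).card := by
        rw [degH, hNF, Finset.card_filter, Finset.card_filter, Finset.card_filter,
          ← Finset.sum_add_distrib]
        refine Finset.sum_congr rfl fun w _ => ?_
        exact hgen (H.Adj z w) (w ∈ X)
      have hin3 : (univ.filter fun w => H.Adj z w ∧ w ∈ X).card ≤ 3 := by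
        calc (univ.filter fun w => H.Adj z w ∧ w ∈ X).card ≤ X.toFinset.card := by
              refine Finset.card_le_card fun w hw => ?_
              simp only [Finset.mem_filter] at hw
              rw [Set.mem_toFinset]
              exact hw.2.2
          _ = 3 := by rw [← Set.ncard_eq_toFinset_card', hX3]
      omega
    have hdegz : 7 ≤ degH G n z := by
      obtain ⟨u, i⟩ := z
      rw [degH_eq]
      have h1 := hdeg u
      have h2 : d * n ≤ (G.neighborFinset u).card * n := Nat.mul_le_mul_right n (hdeg u)
      have h3 : 1 * n ≤ d * n := Nat.mul_le_mul_right n hd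
      omega
    have hcards : 5 ≤ (insert z NF).card := by
      rw [Finset.card_insert_of_notMem hzNF]
      omega
    calc (3 : ℕ) ≤ (insert z NF).card := by omega
      _ ≤ c.supp.toFinset.card := Finset.card_le_card hsub
      _ = c.supp.ncard := (Set.ncard_eq_toFinset_card' _).symm
  · push_neg at hout
    obtain ⟨z0, hz0⟩ := c.exists_rep
    have hz0c : z0 ∈ c.supp := by rw [SimpleGraph.ConnectedComponent.mem_supp_iff]; exact hz0
    have hz0X : z0 ∈ X := hout z0 hz0c
    have hXsub : X ⊆ c.supp := by
      intro x hx
      have hreach := hXc.preconnected ⟨z0, hz0X⟩ ⟨x, hx⟩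
      let hom : (H.induce X) →g (H.deleteEdges S') :=
        ⟨fun a => a.val, fun {a b} hab => by
          rw [SimpleGraph.deleteEdges_adj]
          exact ⟨hab, keep_in G n X a.2 b.2⟩⟩
      have hreach' : (H.deleteEdges S').Reachable z0 x := by
        have h2 := hreach.map hom
        exact h2
      rw [SimpleGraph.ConnectedComponent.mem_supp_iff, ← hz0]
      exact SimpleGraph.ConnectedComponent.sound hreach'.symm
    calc (3 : ℕ) = X.ncard := hX3.symm
      _ ≤ c.supp.ncard := Set.ncard_le_ncard hXsub (Set.toFinite _)

end cutcons
end Aux3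

namespace Aux3
section tri
variable {α : Type*} [DecidableEq α] [Fintype α] (G : SimpleGraph α) [DecidableRel G.Adj] (n : ℕ)

lemma triangle_exists (hn : 4 ≤ n) (u₀ : α) :
    ∃ X : Set (α × Fin n), X.ncard = 3 ∧
      ((strongProd G (completeGraph (Fin n))).induce X).Connected ∧
      (edgeBoundary (strongProd G (completeGraph (Fin n))) X).ncard
        ≤ 3 * n * (G.neighborFinset u₀).card + 3 * n - 9 := by
  set H := strongProd G (completeGraph (Fin n)) with hH
  have h0 : 0 < n := by omega
  have h1 : 1 < n := by omega
  have h2 : 2 < n := by omega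
  set i0 : Fin n := ⟨0, h0⟩
  set i1 : Fin n := ⟨1, h1⟩
  set i2 : Fin n := ⟨2, h2⟩
  have hne01 : (u₀, i0) ≠ (u₀, i1) := by simp [Prod.ext_iff, i0, i1, Fin.ext_iff]
  have hne02 : (u₀, i0) ≠ (u₀, i2) := by simp [Prod.ext_iff, i0, i2, Fin.ext_iff]
  have hne12 : (u₀, i1) ≠ (u₀, i2) := by simp [Prod.ext_iff, i1, i2, Fin.ext_iff]
  set F₀ : Finset (α × Fin n) := {(u₀, i0), (u₀, i1), (u₀, i2)} with hF₀
  have hcard : F₀.card = 3 := Finset.card_eq_three.2 ⟨_, _, _, hne01, hne02, hne12, rfl⟩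
  have hmem : ∀ z ∈ F₀, z.1 = u₀ := by
    intro z hz
    rw [hF₀] at hz
    rcases Finset.mem_insert.1 hz with rfl | hz
    · rfl
    rcases Finset.mem_insert.1 hz with rfl | hz
    · rfl
    · rw [Finset.mem_singleton] at hz; rw [hz]
  refine ⟨↑F₀, by rw [Set.ncard_coe_finset, hcard], ?_, ?_⟩
  · rw [SimpleGraph.connected_iff]
    constructor
    · intro a b
      by_cases hab : a = b
      · rw [hab]
      · apply SimpleGraph.Adj.reachable
        have ha : (a : α × Fin n) ∈ F₀ := by exact_mod_cast a.2
        have hb : (b : α × Fin n) ∈ F₀ := by exact_mod_cast b.2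
        have ha1 := hmem _ ha
        have hb1 := hmem _ hb
        show H.Adj a b
        rw [adjH]
        refine Or.inl ⟨ha1.trans hb1.symm, ?_⟩
        intro hsnd
        apply hab
        apply Subtype.ext
        exact Prod.ext (ha1.trans hb1.symm) hsnd
    · exact ⟨⟨(u₀, i0), by exact_mod_cast Finset.mem_insert_self _ _⟩⟩
  · rw [ncard_edgeBoundary_eq, B_eq_sum_out]
    have hbound : ∀ y ∈ F₀, outF G n F₀ y ≤ (n - 1) + (G.neighborFinset u₀).card * n - 2 := by
      intro y hy
      have hy1 := hmem _ hy
      have hsplit := degH_split G n F₀ y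
      have hinc : 2 ≤ (univ.filter fun z => z ∈ F₀ ∧
          (strongProd G (completeGraph (Fin n))).Adj y z).card := by
        have hsub : F₀.erase y ⊆ univ.filter fun z => z ∈ F₀ ∧
            (strongProd G (completeGraph (Fin n))).Adj y z := by
          intro w hw
          obtain ⟨hwne, hwF⟩ := Finset.mem_erase.1 hw
          rw [Finset.mem_filter]
          refine ⟨Finset.mem_univ w, hwF, ?_⟩
          rw [adjH]
          have hw1 := hmem _ hwF
          refine Or.inl ⟨hy1.trans hw1.symm, ?_⟩
          intro hsnd
          exact hwne (Prod.ext (hw1.trans hy1.symm) hsnd.symm)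
        calc 2 = (F₀.erase y).card := by rw [Finset.card_erase_of_mem hy, hcard]
          _ ≤ _ := Finset.card_le_card hsub
      have hdeg : degH G n y = (n - 1) + (G.neighborFinset u₀).card * n := by
        obtain ⟨uy, iy⟩ := y
        have : uy = u₀ := hy1
        rw [this, degH_eq]
      omega
    calc ∑ y ∈ F₀, outF G n F₀ y
        ≤ ∑ _y ∈ F₀, ((n - 1) + (G.neighborFinset u₀).card * n - 2) :=
          Finset.sum_le_sum hbound
      _ = 3 * ((n - 1) + (G.neighborFinset u₀).card * n - 2) := by
          rw [Finset.sum_const, hcard, smul_eq_mul]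
      _ ≤ 3 * n * (G.neighborFinset u₀).card + 3 * n - 9 := by
          have hc : n * (G.neighborFinset u₀).card = (G.neighborFinset u₀).card * n :=
            Nat.mul_comm _ _
          have h3 : 3 * n * (G.neighborFinset u₀).card
              = 3 * ((G.neighborFinset u₀).card * n) := by ring
          omega

end tri
end Aux3

open Aux3

/-- For a maximally edge-connected graph G of order m ≥ 3 and n ≥ 4,
if min{n²δ(G), (n-1)(m + 2e(G))} ≥ 3nδ(G) + 3n - 9, then G ⊠ Kₙ is maximally
3-restricted edge-connected, i.e. λ₃(G ⊠ Kₙ) = ξ₃(G ⊠ Kₙ). -/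
theorem stmt3 {α : Type*} [Fintype α] (G : SimpleGraph α) (n : ℕ)
    (hmax : edgeConn G = minDeg G)
    (hm : 3 ≤ Fintype.card α) (hn : 4 ≤ n)
    (h : 3 * n * minDeg G + 3 * n - 9 ≤
      min (n ^ 2 * minDeg G) ((n - 1) * (Fintype.card α + 2 * numEdges G))) :
    lamK (strongProd G (completeGraph (Fin n))) 3 =
      ((xi3 (strongProd G (completeGraph (Fin n))) : ℕ) : ℕ∞) := by
  classical
  have hα : Nonempty α := Fintype.card_pos_iff.1 (by omega)
  letI : DecidableEq α := Classical.decEq α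
  letI : DecidableRel G.Adj := Classical.decRel _
  haveI : Nonempty (Fin n) := ⟨⟨0, by omega⟩⟩
  have hd : 1 ≤ minDeg G := by
    by_contra hcon
    have hd0 : minDeg G = 0 := by omega
    rw [hd0] at h
    have h1 := le_trans h (min_le_left _ _)
    simp only [Nat.mul_zero] at h1
    omega
  have hdeg : ∀ u, minDeg G ≤ (G.neighborFinset u).card := fun u => by
    rw [← deg_eq_card]; exact minDeg_le G u
  have hA : 3 * n * minDeg G + 3 * n - 9 ≤ n ^ 2 * minDeg G :=
    le_trans h (min_le_left _ _)
  have hB : 3 * n * minDeg G + 3 * n - 9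
      ≤ (n - 1) * (Fintype.card α + 2 * G.edgeFinset.card) := by
    rw [← numEdges_eq]
    exact le_trans h (min_le_right _ _)
  have hcut : ∀ D : Finset α, D.Nonempty → D ≠ univ → minDeg G ≤ (OPF G D).card := by
    intro D hne hprop
    obtain ⟨x, hx⟩ := hne
    obtain ⟨y, hy⟩ : ∃ y, y ∉ D := by
      by_contra hc; push_neg at hc; exact hprop (Finset.eq_univ_iff_forall.2 hc)
    have hcutmem : IsEdgeCut G (edgeBoundary G (↑D : Set α)) :=
      ⟨edgeBoundary_subset_edgeSet G _,
        not_connected_of_boundary G _ (by exact_mod_cast hx) (by exact_mod_cast hy)⟩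
    calc minDeg G = edgeConn G := hmax.symm
      _ ≤ (edgeBoundary G (↑D : Set α)).ncard := Nat.sInf_le ⟨_, hcutmem, rfl⟩
      _ = (OPF G D).card := ncard_edgeBoundary_eq G D
  obtain ⟨u₀, hu₀⟩ := exists_minDeg G
  have hu₀' : (G.neighborFinset u₀).card = minDeg G := by rw [← deg_eq_card, hu₀]
  obtain ⟨Xt, hXt3, hXtc, hXtb⟩ := triangle_exists G n hn u₀
  rw [hu₀'] at hXtb
  set H := strongProd G (completeGraph (Fin n)) with hH
  have hset : xi3 H ∈ {k | ∃ X : Set (α × Fin n), X.ncard = 3 ∧ (H.induce X).Connected ∧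
      k = (edgeBoundary H X).ncard} := Nat.sInf_mem ⟨_, Xt, hXt3, hXtc, rfl⟩
  obtain ⟨X₀, hX₀3, hX₀c, hX₀e⟩ := hset
  have hxile : xi3 H ≤ 3 * n * minDeg G + 3 * n - 9 :=
    le_trans (Nat.sInf_le ⟨Xt, hXt3, hXtc, rfl⟩) hXtb
  have hrc := boundary_is_cut G n hn (minDeg G) hd hdeg X₀ hX₀3 hX₀c
  have hle : lamK H 3 ≤ ((xi3 H : ℕ) : ℕ∞) := by
    apply sInf_le
    exact ⟨edgeBoundary H X₀, hrc, by rw [hX₀e]⟩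
  have hge : ((xi3 H : ℕ) : ℕ∞) ≤ lamK H 3 := by
    apply le_sInf
    rintro b ⟨S, hS, rfl⟩
    rw [Nat.cast_le]
    obtain ⟨F, hF3, hFc3, hFsub⟩ := exists_component_side H S hS
    have hmain := mainAll G n hn (minDeg G) hd hdeg hcut hA hB F hF3 hFc3
    have hbd : (edgeBoundary H (↑F : Set (α × Fin n))).ncard ≤ S.ncard :=
      Set.ncard_le_ncard hFsub (Set.Finite.subset (H.edgeSet.toFinite) hS.1)
    calc xi3 H ≤ 3 * n * minDeg G + 3 * n - 9 := hxile
      _ ≤ (OPF H F).card := hmain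
      _ = (edgeBoundary H (↑F : Set (α × Fin n))).ncard := (ncard_edgeBoundary_eq H F).symm
      _ ≤ S.ncard := hbd
  exact le_antisymm hle hge
end

section
/- Let H be a connected simple graph and let S be an edge-cut of K₂ ⊙ H, where V(K₂) = {a, b}. If the vertices of {a} × V(H) lie in at least two different components of (K₂ ⊙ H) − S, and the vertices of {b} × V(H) also lie in at least two different components of (K₂ ⊙ H) − S, then |S| ≥ 2λ(H). -/
open SimpleGraph

variable {V : Type*}

section Aux
variable {β : Type*} [Fintype β]

lemma edgeConn_le_OB (H : SimpleGraph β) (X : Set β) (hne : X.Nonempty) (hpr : X ≠ Set.univ) :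
    edgeConn H ≤ {p : β × β | H.Adj p.1 p.2 ∧ p.1 ∈ X ∧ p.2 ∉ X}.ncard := by
  classical
  set OB := {p : β × β | H.Adj p.1 p.2 ∧ p.1 ∈ X ∧ p.2 ∉ X} with hOB
  set Scut : Set (Sym2 β) := (fun p : β × β => s(p.1, p.2)) '' OB with hScut
  have hsub : Scut ⊆ H.edgeSet := by
    rintro e ⟨⟨u, v⟩, ⟨hadj, -, -⟩, rfl⟩
    exact H.mem_edgeSet.mpr hadj
  have key : ∀ u v, (H.deleteEdges Scut).Walk u v → u ∈ X → v ∈ X := by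
    intro u v w
    induction w with
    | nil => exact id
    | @cons a b c h p ih =>
      intro hu
      rw [SimpleGraph.deleteEdges_adj] at h
      by_cases hb : b ∈ X
      · exact ih hb
      · exact absurd (⟨(a, b), ⟨h.1, hu, hb⟩, rfl⟩ : s(a, b) ∈ Scut) h.2
  obtain ⟨x, hx⟩ := hne
  obtain ⟨z, hz⟩ := (Set.ne_univ_iff_exists_notMem X).mp hpr
  have hnc : ¬ (H.deleteEdges Scut).Connected := by
    intro hc
    obtain ⟨w⟩ := hc.preconnected x z
    exact hz (key _ _ w hx)
  have h1 : edgeConn H ≤ Scut.ncard := Nat.sInf_le ⟨Scut, ⟨hsub, hnc⟩, rfl⟩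
  exact h1.trans (Set.ncard_image_le (Set.toFinite OB))

lemma edgeConn_le_deg (H : SimpleGraph β) (hnt : Nontrivial β) (u : β) :
    edgeConn H ≤ (H.neighborSet u).ncard := by
  classical
  obtain ⟨v, hv⟩ := exists_ne u
  have hpr : ({u} : Set β) ≠ Set.univ := by
    intro h
    exact hv (Set.mem_singleton_iff.mp (h.symm ▸ Set.mem_univ v))
  refine (edgeConn_le_OB H {u} ⟨u, rfl⟩ hpr).trans
    (Set.ncard_le_ncard_of_injOn (fun p => p.2) ?_ ?_ (Set.toFinite _))
  · rintro ⟨a, b⟩ ⟨hadj, ha, -⟩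
    exact (show a = u from ha) ▸ hadj
  · rintro ⟨a, b⟩ ⟨-, ha, -⟩ ⟨c, d⟩ ⟨-, hc, -⟩ h
    simp only at h
    have : a = c := by rw [show a = u from ha, show c = u from hc]
    exact Prod.ext this h

omit [Fintype β] in
lemma mem_S_of_adj (S : Set (Sym2 (Bool × β))) {p q : Bool × β}
    (G : SimpleGraph (Bool × β)) (h : G.Adj p q)
    (hne : (G.deleteEdges S).connectedComponentMk p ≠ (G.deleteEdges S).connectedComponentMk q) :
    s(p, q) ∈ S := by
  by_contra hns
  exact hne (ConnectedComponent.sound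
    (SimpleGraph.Adj.reachable ((SimpleGraph.deleteEdges_adj).mpr ⟨h, hns⟩)))

end Aux

section Aux2
variable {β : Type*} [Fintype β]

lemma card_pairs_ge [DecidableEq β] (H : SimpleGraph β) [DecidableRel H.Adj] (T W : Finset β) (lam : ℕ)
    (hlam : ∀ u, lam ≤ (H.neighborSet u).ncard) :
    T.card * (lam - W.card) ≤
      (Finset.univ.filter (fun p : β × β => H.Adj p.1 p.2 ∧ p.1 ∈ T ∧ p.2 ∉ W)).card := by
  classical
  set Pf := Finset.univ.filter (fun p : β × β => H.Adj p.1 p.2 ∧ p.1 ∈ T ∧ p.2 ∉ W) with hPf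
  have hfib : Pf.card = ∑ u ∈ T, (Pf.filter (fun p => p.1 = u)).card :=
    Finset.card_eq_sum_card_fiberwise (fun p hp => (Finset.mem_filter.mp hp).2.2.1)
  rw [hfib]
  have hrow : ∀ u ∈ T, lam - W.card ≤ (Pf.filter (fun p => p.1 = u)).card := by
    intro u hu
    set Nf := (Set.toFinite (H.neighborSet u)).toFinset with hNf
    have h1 : (Nf \ W).card ≤ (Pf.filter (fun p => p.1 = u)).card := by
      refine Finset.card_le_card_of_injOn (fun v => (u, v)) ?_ ?_
      · intro v hv
        rw [Finset.mem_coe, Finset.mem_sdiff, Set.Finite.mem_toFinset] at hv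
        simp only [Pf, Finset.mem_coe, Finset.mem_filter, Finset.mem_univ, true_and]
        exact ⟨⟨hv.1, hu, hv.2⟩, trivial⟩
      · intro a _ b _ h
        exact (Prod.mk.injEq _ _ _ _).mp h |>.2
    have h2 : Nf.card ≤ (Nf \ W).card + W.card :=
      (Finset.card_le_card (by intro x hx; by_cases h : x ∈ W
                               · exact Finset.mem_union_right _ h
                               · exact Finset.mem_union_left _ (Finset.mem_sdiff.mpr ⟨hx, h⟩))).trans
        (Finset.card_union_le _ _)
    have h3 : lam ≤ Nf.card := by
      rw [hNf, ← Set.ncard_eq_toFinset_card]; exact hlam u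
    omega
  calc T.card * (lam - W.card) = ∑ _u ∈ T, (lam - W.card) := by
        rw [Finset.sum_const, smul_eq_mul]
      _ ≤ _ := Finset.sum_le_sum hrow

lemma arith2 (d1 d2 lam : ℕ) (h1 : 1 ≤ d1) (h2 : 1 ≤ d2) :
    2 * lam ≤ d1 + d2 + (d1 * (lam - d2) + d2 * (lam - d1)) := by
  rcases le_total lam d1 with ha | ha <;> rcases le_total lam d2 with hb | hb
  · simp only [Nat.sub_eq_zero_of_le hb, Nat.sub_eq_zero_of_le ha, Nat.mul_zero]
    omega
  · -- lam ≤ d1, d2 ≤ lam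
    simp only [Nat.sub_eq_zero_of_le ha, Nat.mul_zero]
    have h3 : lam - d2 ≤ d1 * (lam - d2) := Nat.le_mul_of_pos_left _ h1
    set x := d1 * (lam - d2) with hx
    clear_value x
    omega
  · -- lam ≤ d2, d1 ≤ lam
    simp only [Nat.sub_eq_zero_of_le hb, Nat.mul_zero]
    have h3 : lam - d1 ≤ d2 * (lam - d1) := Nat.le_mul_of_pos_left _ h2
    set x := d2 * (lam - d1) with hx
    clear_value x
    omega
  · zify [ha, hb]
    nlinarith [mul_nonneg (by linarith : (0:ℤ) ≤ (d1:ℤ) + d2 - 2)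
        (by linarith : (0:ℤ) ≤ 2*(lam:ℤ) - d1 - d2), sq_nonneg ((d1:ℤ) - d2)]

end Aux2

section MainTwo
variable {β : Type*} [Fintype β]

lemma main_two (H : SimpleGraph β) (hnt : Nontrivial β)
    (S : Set (Sym2 (Bool × β))) (C : ((odotK2 H).deleteEdges S).ConnectedComponent)
    (hD1 : ({y | ((odotK2 H).deleteEdges S).connectedComponentMk (false, y) = C} \
            {y | ((odotK2 H).deleteEdges S).connectedComponentMk (true, y) = C}).Nonempty)
    (hD2 : ({y | ((odotK2 H).deleteEdges S).connectedComponentMk (true, y) = C} \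
            {y | ((odotK2 H).deleteEdges S).connectedComponentMk (false, y) = C}).Nonempty) :
    2 * edgeConn H ≤ S.ncard := by
  classical
  set A : Set β := {y | ((odotK2 H).deleteEdges S).connectedComponentMk (false, y) = C} with hA
  set B : Set β := {y | ((odotK2 H).deleteEdges S).connectedComponentMk (true, y) = C} with hB
  set lam := edgeConn H with hlam
  have hlamdeg : ∀ u, lam ≤ (H.neighborSet u).ncard := edgeConn_le_deg H hnt
  set D1 : Set β := A \ B with hD1d
  set D2 : Set β := B \ A with hD2d
  set P : β × β → Prop := fun p => (p.1 ∈ A ∧ p.2 ∉ B) ∨ (p.1 ∉ A ∧ p.2 ∈ B) with hPdef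
  set φ : β × β → β × β := fun p => if P p then p else p.swap with hφ
  set M : Set (β × β) :=
    {p | H.Adj p.1 p.2 ∧ ((p.1 ∈ D1 ∧ p.2 ∉ D2) ∨ (p.1 ∈ D2 ∧ p.2 ∉ D1))} with hM
  have hφM : ∀ p ∈ M, P (φ p) ∧ H.Adj (φ p).1 (φ p).2 := by
    rintro ⟨u, v⟩ ⟨hadj, hcase⟩
    by_cases hp : P (u, v)
    · simp only [hφ, if_pos hp]; exact ⟨hp, hadj⟩
    · simp only [hφ, if_neg hp]
      refine ⟨?_, hadj.symm⟩
      rcases hcase with ⟨h1, h2⟩ | ⟨h1, h2⟩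
      · have hv1 : v ∈ B := by
          by_contra hv
          exact hp (Or.inl ⟨h1.1, hv⟩)
        have hv2 : v ∈ A := by
          by_contra hv
          exact h2 ⟨hv1, hv⟩
        exact Or.inl ⟨hv2, h1.2⟩
      · have hv1 : v ∉ B := by
          intro hv
          exact hp (Or.inr ⟨h1.2, hv⟩)
        have hv2 : v ∉ A := fun hv => h2 ⟨hv, hv1⟩
        exact Or.inr ⟨hv2, h1.1⟩
  have hMM : ∀ p ∈ M, p.swap ∈ M → P p := by
    rintro ⟨u, v⟩ ⟨hadj, hc⟩ ⟨hadj', hc'⟩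
    rcases hc with ⟨h1, h2⟩ | ⟨h1, h2⟩
    · rcases hc' with ⟨g1, g2⟩ | ⟨g1, g2⟩
      · exact Or.inl ⟨h1.1, g1.2⟩
      · exact absurd g1 h2
    · rcases hc' with ⟨g1, g2⟩ | ⟨g1, g2⟩
      · exact absurd g1 h2
      · exact Or.inr ⟨h1.2, g1.1⟩
  have hedgeS : ∀ q : β × β, P q → H.Adj q.1 q.2 →
      s(((false : Bool), q.1), ((true : Bool), q.2)) ∈ S := by
    rintro ⟨x, y⟩ hq hadj
    apply mem_S_of_adj S (odotK2 H)
    · exact ⟨by simp, Or.inr hadj⟩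
    · rcases hq with ⟨h1, h2⟩ | ⟨h1, h2⟩
      · have h1' : ((odotK2 H).deleteEdges S).connectedComponentMk (false, x) = C := h1
        exact fun h => h2 (show ((odotK2 H).deleteEdges S).connectedComponentMk (true, y) = C
          from h.symm.trans h1')
      · have h2' : ((odotK2 H).deleteEdges S).connectedComponentMk (true, y) = C := h2
        exact fun h => h1 (show ((odotK2 H).deleteEdges S).connectedComponentMk (false, x) = C
          from h.trans h2')
  have hvertS : ∀ y ∈ D1 ∪ D2, s(((false : Bool), y), ((true : Bool), y)) ∈ S := by
    intro y hy
    apply mem_S_of_adj S (odotK2 H)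
    · exact ⟨by simp, Or.inl rfl⟩
    · rcases hy with ⟨h1, h2⟩ | ⟨h1, h2⟩
      · have h1' : ((odotK2 H).deleteEdges S).connectedComponentMk (false, y) = C := h1
        exact fun h => h2 (show ((odotK2 H).deleteEdges S).connectedComponentMk (true, y) = C
          from h.symm.trans h1')
      · have h1' : ((odotK2 H).deleteEdges S).connectedComponentMk (true, y) = C := h1
        exact fun h => h2 (show ((odotK2 H).deleteEdges S).connectedComponentMk (false, y) = C
          from h.trans h1')
  set Fm : β ⊕ β × β → Sym2 (Bool × β) :=
    Sum.elim (fun y => s((false, y), (true, y)))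
      (fun p => s((false, (φ p).1), (true, (φ p).2))) with hFm
  set Src : Set (β ⊕ β × β) := Sum.inl '' (D1 ∪ D2) ∪ Sum.inr '' M with hSrc
  have hFS : ∀ x ∈ Src, Fm x ∈ S := by
    rintro x (⟨y, hy, rfl⟩ | ⟨p, hp, rfl⟩)
    · exact hvertS y hy
    · exact hedgeS (φ p) (hφM p hp).1 (hφM p hp).2
  have hval : ∀ (x y x' y' : β),
      s(((false : Bool), x), ((true : Bool), y)) = s(((false : Bool), x'), ((true : Bool), y')) →
      x = x' ∧ y = y' := by
    intro x y x' y' h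
    rw [Sym2.eq_iff] at h
    rcases h with ⟨h1, h2⟩ | ⟨h1, h2⟩
    · exact ⟨congrArg Prod.snd h1, congrArg Prod.snd h2⟩
    · exact absurd (congrArg Prod.fst h1) (by simp)
  have hinj : Set.InjOn Fm Src := by
    rintro x (⟨a, ha, rfl⟩ | ⟨p, hp, rfl⟩) y (⟨b, hb, rfl⟩ | ⟨q, hq, rfl⟩) hxy
    · obtain ⟨h1, -⟩ := hval _ _ _ _ hxy
      rw [h1]
    · obtain ⟨h1, h2⟩ := hval _ _ _ _ hxy
      have := (hφM q hq).2
      rw [← h1, ← h2] at this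
      exact absurd this (H.loopless.irrefl a)
    · obtain ⟨h1, h2⟩ := hval _ _ _ _ hxy
      have := (hφM p hp).2
      rw [h1, h2] at this
      exact absurd this (H.loopless.irrefl b)
    · obtain ⟨h1, h2⟩ := hval _ _ _ _ hxy
      have hφpq : φ p = φ q := Prod.ext h1 h2
      by_cases hp1 : P p <;> by_cases hq1 : P q
      · rw [hφ] at hφpq; simp only [if_pos hp1, if_pos hq1] at hφpq; rw [hφpq]
      · exfalso
        rw [hφ] at hφpq; simp only [if_pos hp1, if_neg hq1] at hφpq
        have hq' : q.swap ∈ M := by rw [← hφpq]; exact hp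
        exact hq1 (hMM q hq hq')
      · exfalso
        rw [hφ] at hφpq; simp only [if_neg hp1, if_pos hq1] at hφpq
        have hp' : p.swap ∈ M := by rw [hφpq]; exact hq
        exact hp1 (hMM p hp hp')
      · rw [hφ] at hφpq; simp only [if_neg hp1, if_neg hq1] at hφpq
        rw [show p = q from by rw [← Prod.swap_swap p, hφpq, Prod.swap_swap]]
  have hcount1 : Src.ncard = (D1 ∪ D2).ncard + M.ncard := by
    rw [hSrc, Set.ncard_union_eq ?disj (Set.toFinite _) (Set.toFinite _),
        Set.ncard_image_of_injective _ Sum.inl_injective,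
        Set.ncard_image_of_injective _ Sum.inr_injective]
    case disj =>
      rw [Set.disjoint_left]
      rintro x ⟨y, -, rfl⟩ ⟨p, -, h⟩
      cases h
  have hcount2 : Src.ncard ≤ S.ncard :=
    calc Src.ncard = (Fm '' Src).ncard := (Set.ncard_image_of_injOn hinj).symm
      _ ≤ S.ncard := Set.ncard_le_ncard (by rintro e ⟨x, hx, rfl⟩; exact hFS x hx)
            (Set.toFinite S)
  have hdisjD : Disjoint D1 D2 := by
    rw [Set.disjoint_left]
    intro y hy1 hy2
    exact hy2.2 hy1.1
  have hDU : (D1 ∪ D2).ncard = D1.ncard + D2.ncard :=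
    Set.ncard_union_eq hdisjD (Set.toFinite _) (Set.toFinite _)
  have hd1pos : 1 ≤ D1.ncard := (Set.ncard_pos (Set.toFinite _)).mpr hD1
  have hd2pos : 1 ≤ D2.ncard := (Set.ncard_pos (Set.toFinite _)).mpr hD2
  have hMlow : D1.ncard * (lam - D2.ncard) + D2.ncard * (lam - D1.ncard) ≤ M.ncard := by
    haveI : DecidableRel H.Adj := Classical.decRel _
    set D1f := (Set.toFinite D1).toFinset with hD1f
    set D2f := (Set.toFinite D2).toFinset with hD2f
    have hc1 : D1.ncard = D1f.card := Set.ncard_eq_toFinset_card _ _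
    have hc2 : D2.ncard = D2f.card := Set.ncard_eq_toFinset_card _ _
    set P1 := Finset.univ.filter (fun p : β × β => H.Adj p.1 p.2 ∧ p.1 ∈ D1f ∧ p.2 ∉ D2f)
      with hP1
    set P2 := Finset.univ.filter (fun p : β × β => H.Adj p.1 p.2 ∧ p.1 ∈ D2f ∧ p.2 ∉ D1f)
      with hP2
    have hb1 : D1f.card * (lam - D2f.card) ≤ P1.card := card_pairs_ge H D1f D2f lam hlamdeg
    have hb2 : D2f.card * (lam - D1f.card) ≤ P2.card := card_pairs_ge H D2f D1f lam hlamdeg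
    have hsubM : ↑(P1 ∪ P2) ⊆ M := by
      intro p hp
      rcases Finset.mem_union.mp (by exact_mod_cast hp) with h | h
      · obtain ⟨-, hadj, h1, h2⟩ := Finset.mem_filter.mp h
        exact ⟨hadj, Or.inl ⟨(Set.Finite.mem_toFinset _).mp h1,
          fun hc => h2 ((Set.Finite.mem_toFinset _).mpr hc)⟩⟩
      · obtain ⟨-, hadj, h1, h2⟩ := Finset.mem_filter.mp h
        exact ⟨hadj, Or.inr ⟨(Set.Finite.mem_toFinset _).mp h1,
          fun hc => h2 ((Set.Finite.mem_toFinset _).mpr hc)⟩⟩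
    have hdisjf : Disjoint P1 P2 := by
      rw [Finset.disjoint_left]
      intro p hp1 hp2
      obtain ⟨-, -, h1, -⟩ := Finset.mem_filter.mp hp1
      obtain ⟨-, -, h2, -⟩ := Finset.mem_filter.mp hp2
      exact ((Set.Finite.mem_toFinset _).mp h2).2 ((Set.Finite.mem_toFinset _).mp h1).1
    calc D1.ncard * (lam - D2.ncard) + D2.ncard * (lam - D1.ncard)
        = D1f.card * (lam - D2f.card) + D2f.card * (lam - D1f.card) := by rw [hc1, hc2]
      _ ≤ P1.card + P2.card := add_le_add hb1 hb2
      _ = (P1 ∪ P2).card := (Finset.card_union_of_disjoint hdisjf).symm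
      _ = (↑(P1 ∪ P2) : Set (β × β)).ncard := (Set.ncard_coe_finset _).symm
      _ ≤ M.ncard := Set.ncard_le_ncard hsubM (Set.toFinite M)
  calc 2 * lam
      ≤ D1.ncard + D2.ncard + (D1.ncard * (lam - D2.ncard) + D2.ncard * (lam - D1.ncard)) :=
        arith2 _ _ _ hd1pos hd2pos
    _ ≤ (D1 ∪ D2).ncard + M.ncard := by rw [hDU]; exact add_le_add le_rfl hMlow
    _ = Src.ncard := hcount1.symm
    _ ≤ S.ncard := hcount2

end MainTwo
section MainIU
variable {β : Type*} [Fintype β]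

lemma main_iu (H : SimpleGraph β)
    (S : Set (Sym2 (Bool × β))) (C : ((odotK2 H).deleteEdges S).ConnectedComponent)
    (hne : ({y | ((odotK2 H).deleteEdges S).connectedComponentMk (false, y) = C} ∩
            {y | ((odotK2 H).deleteEdges S).connectedComponentMk (true, y) = C}).Nonempty)
    (hpr : ({y | ((odotK2 H).deleteEdges S).connectedComponentMk (false, y) = C} ∪
            {y | ((odotK2 H).deleteEdges S).connectedComponentMk (true, y) = C}) ≠ Set.univ) :
    2 * edgeConn H ≤ S.ncard := by
  classical
  set A : Set β := {y | ((odotK2 H).deleteEdges S).connectedComponentMk (false, y) = C} with hA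
  set B : Set β := {y | ((odotK2 H).deleteEdges S).connectedComponentMk (true, y) = C} with hB
  set lam := edgeConn H with hlam
  have hIpr : A ∩ B ≠ Set.univ := by
    intro h
    apply hpr
    rw [Set.eq_univ_iff_forall] at h ⊢
    exact fun x => Set.mem_union_left _ (h x).1
  have h1 : lam ≤ {p : β × β | H.Adj p.1 p.2 ∧ p.1 ∈ A ∩ B ∧ p.2 ∉ A ∩ B}.ncard :=
    edgeConn_le_OB H (A ∩ B) hne hIpr
  have h2 : lam ≤ {p : β × β | H.Adj p.1 p.2 ∧ p.1 ∈ A ∪ B ∧ p.2 ∉ A ∪ B}.ncard :=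
    edgeConn_le_OB H (A ∪ B) (hne.mono (Set.inter_subset_left.trans Set.subset_union_left)) hpr
  set OB1 : Set (β × β) := {p : β × β | H.Adj p.1 p.2 ∧ p.1 ∈ A ∩ B ∧ p.2 ∉ A ∩ B} with hOB1
  set OB2 : Set (β × β) := {p : β × β | H.Adj p.1 p.2 ∧ p.1 ∈ A ∪ B ∧ p.2 ∉ A ∪ B} with hOB2
  set Fm : β × β ⊕ β × β → Sym2 (Bool × β) :=
    Sum.elim
      (fun p => if p.2 ∈ B then s((false, p.2), (true, p.1)) else s((false, p.1), (true, p.2)))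
      (fun p => if p.1 ∈ B then s((false, p.2), (true, p.1)) else s((false, p.1), (true, p.2)))
    with hFm
  set Src : Set (β × β ⊕ β × β) := Sum.inl '' OB1 ∪ Sum.inr '' OB2 with hSrc
  -- membership facts
  have hmkA : ∀ y, y ∈ A → ((odotK2 H).deleteEdges S).connectedComponentMk (false, y) = C :=
    fun y hy => hy
  have hmkB : ∀ y, y ∈ B → ((odotK2 H).deleteEdges S).connectedComponentMk (true, y) = C :=
    fun y hy => hy
  have hFS : ∀ x ∈ Src, Fm x ∈ S := by
    rintro x (⟨p, ⟨hadj, hp1, hp2⟩, rfl⟩ | ⟨p, ⟨hadj, hp1, hp2⟩, rfl⟩)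
    · simp only [hFm, Sum.elim_inl]
      by_cases hb : p.2 ∈ B
      · rw [if_pos hb]
        have hp2A : p.2 ∉ A := fun hc => hp2 ⟨hc, hb⟩
        apply mem_S_of_adj S (odotK2 H)
        · exact ⟨by simp, Or.inr hadj.symm⟩
        · exact fun h => hp2A (h.trans (hmkB _ hp1.2))
      · rw [if_neg hb]
        apply mem_S_of_adj S (odotK2 H)
        · exact ⟨by simp, Or.inr hadj⟩
        · exact fun h => hb (h.symm.trans (hmkA _ hp1.1))
    · simp only [hFm, Sum.elim_inr]
      by_cases hb : p.1 ∈ B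
      · rw [if_pos hb]
        have hp2A : p.2 ∉ A := fun hc => hp2 (Or.inl hc)
        apply mem_S_of_adj S (odotK2 H)
        · exact ⟨by simp, Or.inr hadj.symm⟩
        · exact fun h => hp2A (h.trans (hmkB _ hb))
      · rw [if_neg hb]
        have hp1A : p.1 ∈ A := hp1.resolve_right hb
        have hp2B : p.2 ∉ B := fun hc => hp2 (Or.inr hc)
        apply mem_S_of_adj S (odotK2 H)
        · exact ⟨by simp, Or.inr hadj⟩
        · exact fun h => hp2B (h.symm.trans (hmkA _ hp1A))
  have hval : ∀ (x y x' y' : β),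
      s(((false : Bool), x), ((true : Bool), y)) = s(((false : Bool), x'), ((true : Bool), y')) →
      x = x' ∧ y = y' := by
    intro x y x' y' h
    rw [Sym2.eq_iff] at h
    rcases h with ⟨h1, h2⟩ | ⟨h1, h2⟩
    · exact ⟨congrArg Prod.snd h1, congrArg Prod.snd h2⟩
    · exact absurd (congrArg Prod.fst h1) (by simp)
  have hinj : Set.InjOn Fm Src := by
    rintro x (⟨p, ⟨hadjp, hp1, hp2⟩, rfl⟩ | ⟨p, ⟨hadjp, hp1, hp2⟩, rfl⟩)
      y (⟨q, ⟨hadjq, hq1, hq2⟩, rfl⟩ | ⟨q, ⟨hadjq, hq1, hq2⟩, rfl⟩) hxy <;>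
      simp only [hFm, Sum.elim_inl, Sum.elim_inr] at hxy
    · by_cases hb1 : p.2 ∈ B <;> by_cases hb2 : q.2 ∈ B
      · rw [if_pos hb1, if_pos hb2] at hxy
        obtain ⟨e1, e2⟩ := hval _ _ _ _ hxy
        rw [show p = q from Prod.ext e2 e1]
      · rw [if_pos hb1, if_neg hb2] at hxy
        obtain ⟨e1, e2⟩ := hval _ _ _ _ hxy
        exact absurd (e1.symm ▸ hq1.1 : p.2 ∈ A) (fun hc => hp2 ⟨hc, hb1⟩)
      · rw [if_neg hb1, if_pos hb2] at hxy
        obtain ⟨e1, e2⟩ := hval _ _ _ _ hxy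
        exact absurd (e1 ▸ hp1.1 : q.2 ∈ A) (fun hc => hq2 ⟨hc, hb2⟩)
      · rw [if_neg hb1, if_neg hb2] at hxy
        obtain ⟨e1, e2⟩ := hval _ _ _ _ hxy
        rw [show p = q from Prod.ext e1 e2]
    · by_cases hb1 : p.2 ∈ B <;> by_cases hb2 : q.1 ∈ B
      · rw [if_pos hb1, if_pos hb2] at hxy
        obtain ⟨e1, e2⟩ := hval _ _ _ _ hxy
        exact absurd (e1 ▸ hb1 : q.2 ∈ B) (fun hc => hq2 (Or.inr hc))
      · rw [if_pos hb1, if_neg hb2] at hxy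
        obtain ⟨e1, e2⟩ := hval _ _ _ _ hxy
        exact absurd (e2 ▸ hp1.1 : q.2 ∈ A) (fun hc => hq2 (Or.inl hc))
      · rw [if_neg hb1, if_pos hb2] at hxy
        obtain ⟨e1, e2⟩ := hval _ _ _ _ hxy
        exact absurd (e1 ▸ hp1.1 : q.2 ∈ A) (fun hc => hq2 (Or.inl hc))
      · rw [if_neg hb1, if_neg hb2] at hxy
        obtain ⟨e1, e2⟩ := hval _ _ _ _ hxy
        exact absurd (e1 ▸ hp1.2 : q.1 ∈ B) hb2
    · by_cases hb1 : p.1 ∈ B <;> by_cases hb2 : q.2 ∈ B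
      · rw [if_pos hb1, if_pos hb2] at hxy
        obtain ⟨e1, e2⟩ := hval _ _ _ _ hxy
        exact absurd (e1.symm ▸ hb2 : p.2 ∈ B) (fun hc => hp2 (Or.inr hc))
      · rw [if_pos hb1, if_neg hb2] at hxy
        obtain ⟨e1, e2⟩ := hval _ _ _ _ hxy
        exact absurd (e1.symm ▸ hq1.1 : p.2 ∈ A) (fun hc => hp2 (Or.inl hc))
      · rw [if_neg hb1, if_pos hb2] at hxy
        obtain ⟨e1, e2⟩ := hval _ _ _ _ hxy
        have hp1A : p.1 ∈ A := hp1.resolve_right hb1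
        exact absurd (e1 ▸ hp1A : q.2 ∈ A) (fun hc => hq2 ⟨hc, hb2⟩)
      · rw [if_neg hb1, if_neg hb2] at hxy
        obtain ⟨e1, e2⟩ := hval _ _ _ _ hxy
        exact absurd (e1.symm ▸ hq1.2 : p.1 ∈ B) hb1
    · by_cases hb1 : p.1 ∈ B <;> by_cases hb2 : q.1 ∈ B
      · rw [if_pos hb1, if_pos hb2] at hxy
        obtain ⟨e1, e2⟩ := hval _ _ _ _ hxy
        rw [show p = q from Prod.ext e2 e1]
      · rw [if_pos hb1, if_neg hb2] at hxy
        obtain ⟨e1, e2⟩ := hval _ _ _ _ hxy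
        have hq1A : q.1 ∈ A := hq1.resolve_right hb2
        exact absurd (e1.symm ▸ hq1A : p.2 ∈ A) (fun hc => hp2 (Or.inl hc))
      · rw [if_neg hb1, if_pos hb2] at hxy
        obtain ⟨e1, e2⟩ := hval _ _ _ _ hxy
        have hp1A : p.1 ∈ A := hp1.resolve_right hb1
        exact absurd (e1 ▸ hp1A : q.2 ∈ A) (fun hc => hq2 (Or.inl hc))
      · rw [if_neg hb1, if_neg hb2] at hxy
        obtain ⟨e1, e2⟩ := hval _ _ _ _ hxy
        rw [show p = q from Prod.ext e1 e2]
  have hcount1 : Src.ncard = OB1.ncard + OB2.ncard := by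
    rw [hSrc, Set.ncard_union_eq ?disj (Set.toFinite _) (Set.toFinite _),
        Set.ncard_image_of_injective _ Sum.inl_injective,
        Set.ncard_image_of_injective _ Sum.inr_injective]
    case disj =>
      rw [Set.disjoint_left]
      rintro x ⟨u, -, rfl⟩ ⟨v, -, h⟩
      cases h
  have hcount2 : Src.ncard ≤ S.ncard :=
    calc Src.ncard = (Fm '' Src).ncard := (Set.ncard_image_of_injOn hinj).symm
      _ ≤ S.ncard := Set.ncard_le_ncard (by rintro e ⟨x, hx, rfl⟩; exact hFS x hx)
            (Set.toFinite S)
  calc 2 * lam = lam + lam := two_mul lam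
    _ ≤ OB1.ncard + OB2.ncard := add_le_add h1 h2
    _ = Src.ncard := hcount1.symm
    _ ≤ S.ncard := hcount2

end MainIU
/-- If S is an edge-cut of K₂ ⊙ H such that the vertices of the
a-layer lie in at least two components and the vertices of the b-layer lie in
at least two components, then |S| ≥ 2λ(H).  Here a = `false`, b = `true`. -/
theorem stmt5 {β : Type*} [Fintype β] (H : SimpleGraph β) (hH : H.Connected)
    (S : Set (Sym2 (Bool × β))) (hS : IsEdgeCut (odotK2 H) S)
    (ha : ∃ y₁ y₂ : β,
      ((odotK2 H).deleteEdges S).connectedComponentMk (false, y₁) ≠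
      ((odotK2 H).deleteEdges S).connectedComponentMk (false, y₂))
    (hb : ∃ y₁ y₂ : β,
      ((odotK2 H).deleteEdges S).connectedComponentMk (true, y₁) ≠
      ((odotK2 H).deleteEdges S).connectedComponentMk (true, y₂)) :
    2 * edgeConn H ≤ S.ncard := by
  classical
  obtain ⟨y₁, y₂, hy⟩ := ha
  obtain ⟨z₁, z₂, hz⟩ := hb
  have hnt : Nontrivial β := ⟨⟨y₁, y₂, fun h => hy (by rw [h])⟩⟩
  have hAneq : ∀ C : ((odotK2 H).deleteEdges S).ConnectedComponent,
      {y | ((odotK2 H).deleteEdges S).connectedComponentMk (false, y) = C} ≠ Set.univ := by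
    intro C h
    have h1 := Set.eq_univ_iff_forall.mp h y₁
    have h2 := Set.eq_univ_iff_forall.mp h y₂
    exact hy (h1.trans h2.symm)
  have hBneq : ∀ C : ((odotK2 H).deleteEdges S).ConnectedComponent,
      {y | ((odotK2 H).deleteEdges S).connectedComponentMk (true, y) = C} ≠ Set.univ := by
    intro C h
    have h1 := Set.eq_univ_iff_forall.mp h z₁
    have h2 := Set.eq_univ_iff_forall.mp h z₂
    exact hz (h1.trans h2.symm)
  set C1 := ((odotK2 H).deleteEdges S).connectedComponentMk (false, y₁) with hC1
  by_cases hB1 : {y | ((odotK2 H).deleteEdges S).connectedComponentMk (true, y) = C1} = ∅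
  · set C2 := ((odotK2 H).deleteEdges S).connectedComponentMk (true, y₁) with hC2
    by_cases hA2 : {y | ((odotK2 H).deleteEdges S).connectedComponentMk (false, y) = C2} = ∅
    · -- final case : both (false,y₁) and (true,y₁) are isolated
      have hS1 : ∀ v ∈ H.neighborSet y₁, s(((false : Bool), y₁), ((true : Bool), v)) ∈ S := by
        intro v hv
        apply mem_S_of_adj S (odotK2 H)
        · exact ⟨by simp, Or.inr hv⟩
        · intro h
          have hvB : v ∈ {y | ((odotK2 H).deleteEdges S).connectedComponentMk (true, y) = C1} :=
            h.symm
          rw [hB1] at hvB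
          exact hvB
      have hS2 : ∀ v ∈ H.neighborSet y₁, s(((false : Bool), v), ((true : Bool), y₁)) ∈ S := by
        intro v hv
        apply mem_S_of_adj S (odotK2 H)
        · exact ⟨by simp, Or.inr (H.adj_symm hv)⟩
        · intro h
          have hvA : v ∈ {y | ((odotK2 H).deleteEdges S).connectedComponentMk (false, y) = C2} :=
            h
          rw [hA2] at hvA
          exact hvA
      set N := H.neighborSet y₁ with hN
      set Fm : β ⊕ β → Sym2 (Bool × β) :=
        Sum.elim (fun v => s((false, y₁), (true, v))) (fun v => s((false, v), (true, y₁))) with hFm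
      set Src : Set (β ⊕ β) := Sum.inl '' N ∪ Sum.inr '' N with hSrc
      have hval : ∀ (x y x' y' : β),
          s(((false : Bool), x), ((true : Bool), y)) = s(((false : Bool), x'), ((true : Bool), y')) →
          x = x' ∧ y = y' := by
        intro x y x' y' h
        rw [Sym2.eq_iff] at h
        rcases h with ⟨h1, h2⟩ | ⟨h1, h2⟩
        · exact ⟨congrArg Prod.snd h1, congrArg Prod.snd h2⟩
        · exact absurd (congrArg Prod.fst h1) (by simp)
      have hFS : ∀ x ∈ Src, Fm x ∈ S := by
        rintro x (⟨v, hv, rfl⟩ | ⟨v, hv, rfl⟩)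
        · exact hS1 v hv
        · exact hS2 v hv
      have hinj : Set.InjOn Fm Src := by
        rintro x (⟨v, hv, rfl⟩ | ⟨v, hv, rfl⟩) y (⟨w, hw, rfl⟩ | ⟨w, hw, rfl⟩) hxy <;>
          simp only [hFm, Sum.elim_inl, Sum.elim_inr] at hxy <;>
          obtain ⟨e1, e2⟩ := hval _ _ _ _ hxy
        · rw [e2]
        · exfalso; rw [e2] at hv; exact H.loopless.irrefl y₁ hv
        · exfalso; rw [e1] at hv; exact H.loopless.irrefl y₁ hv
        · rw [e1]
      have hcount1 : Src.ncard = N.ncard + N.ncard := by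
        rw [hSrc, Set.ncard_union_eq ?disj (Set.toFinite _) (Set.toFinite _),
            Set.ncard_image_of_injective _ Sum.inl_injective,
            Set.ncard_image_of_injective _ Sum.inr_injective]
        case disj =>
          rw [Set.disjoint_left]
          rintro x ⟨u, -, rfl⟩ ⟨v, -, h⟩
          cases h
      have hcount2 : Src.ncard ≤ S.ncard :=
        calc Src.ncard = (Fm '' Src).ncard := (Set.ncard_image_of_injOn hinj).symm
          _ ≤ S.ncard := Set.ncard_le_ncard (by rintro e ⟨x, hx, rfl⟩; exact hFS x hx)
                (Set.toFinite S)
      have hdeg : edgeConn H ≤ N.ncard := edgeConn_le_deg H hnt y₁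
      calc 2 * edgeConn H = edgeConn H + edgeConn H := two_mul _
        _ ≤ N.ncard + N.ncard := add_le_add hdeg hdeg
        _ = Src.ncard := hcount1.symm
        _ ≤ S.ncard := hcount2
    · -- A2 nonempty
      by_cases hd1 : ({y | ((odotK2 H).deleteEdges S).connectedComponentMk (false, y) = C2} \
          {y | ((odotK2 H).deleteEdges S).connectedComponentMk (true, y) = C2}).Nonempty
      · by_cases hd2 : ({y | ((odotK2 H).deleteEdges S).connectedComponentMk (true, y) = C2} \
            {y | ((odotK2 H).deleteEdges S).connectedComponentMk (false, y) = C2}).Nonempty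
        · exact main_two H hnt S C2 hd1 hd2
        · have hsub : {y | ((odotK2 H).deleteEdges S).connectedComponentMk (true, y) = C2} ⊆
              {y | ((odotK2 H).deleteEdges S).connectedComponentMk (false, y) = C2} :=
            Set.diff_eq_empty.mp (Set.not_nonempty_iff_eq_empty.mp hd2)
          apply main_iu H S C2
          · exact ⟨y₁, hsub rfl, rfl⟩
          · rw [Set.union_eq_self_of_subset_right hsub]
            exact hAneq C2
      · have hsub : {y | ((odotK2 H).deleteEdges S).connectedComponentMk (false, y) = C2} ⊆
            {y | ((odotK2 H).deleteEdges S).connectedComponentMk (true, y) = C2} :=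
          Set.diff_eq_empty.mp (Set.not_nonempty_iff_eq_empty.mp hd1)
        obtain ⟨a, haA⟩ := Set.nonempty_iff_ne_empty.mpr hA2
        apply main_iu H S C2
        · exact ⟨a, haA, hsub haA⟩
        · rw [Set.union_eq_self_of_subset_left hsub]
          exact hBneq C2
  · -- B1 nonempty
    obtain ⟨b, hbB⟩ := Set.nonempty_iff_ne_empty.mpr hB1
    by_cases hd1 : ({y | ((odotK2 H).deleteEdges S).connectedComponentMk (false, y) = C1} \
        {y | ((odotK2 H).deleteEdges S).connectedComponentMk (true, y) = C1}).Nonempty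
    · by_cases hd2 : ({y | ((odotK2 H).deleteEdges S).connectedComponentMk (true, y) = C1} \
          {y | ((odotK2 H).deleteEdges S).connectedComponentMk (false, y) = C1}).Nonempty
      · exact main_two H hnt S C1 hd1 hd2
      · have hsub : {y | ((odotK2 H).deleteEdges S).connectedComponentMk (true, y) = C1} ⊆
            {y | ((odotK2 H).deleteEdges S).connectedComponentMk (false, y) = C1} :=
          Set.diff_eq_empty.mp (Set.not_nonempty_iff_eq_empty.mp hd2)
        apply main_iu H S C1
        · exact ⟨b, hsub hbB, hbB⟩
        · rw [Set.union_eq_self_of_subset_right hsub]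
          exact hAneq C1
    · have hsub : {y | ((odotK2 H).deleteEdges S).connectedComponentMk (false, y) = C1} ⊆
          {y | ((odotK2 H).deleteEdges S).connectedComponentMk (true, y) = C1} :=
        Set.diff_eq_empty.mp (Set.not_nonempty_iff_eq_empty.mp hd1)
      apply main_iu H S C1
      · exact ⟨y₁, rfl, hsub rfl⟩
      · rw [Set.union_eq_self_of_subset_left hsub]
        exact hBneq C1
end

section
/- Let G be a connected simple graph on at least 4 vertices that is not a star K_{1,n−1}. Then G has a restricted edge-cut and λ₂(G) ≤ ξ(G). -/
open SimpleGraph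

variable {V : Type*}

section Aux
variable {V : Type*}

lemma walk_mem {G : SimpleGraph V} {T : Set V}
    (h : ∀ a b, G.Adj a b → a ∈ T → b ∈ T) :
    ∀ {a b : V}, G.Walk a b → a ∈ T → b ∈ T := by
  intro a b w
  induction w with
  | nil => exact id
  | cons hadj p ih => exact fun ha => ih (h _ _ hadj ha)

lemma mem_boundary {G : SimpleGraph V} {X : Set V} {a b : V}
    (hadj : G.Adj a b) (ha : a ∈ X) (hb : b ∉ X) : s(a,b) ∈ edgeBoundary G X :=
  ⟨(G.mem_edgeSet).mpr hadj, a, b, rfl, ha, hb⟩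

lemma not_mem_boundary_in {G : SimpleGraph V} {X : Set V} {a b : V}
    (ha : a ∈ X) (hb : b ∈ X) : s(a,b) ∉ edgeBoundary G X := by
  rintro ⟨-, x, y, hxy, hx, hy⟩
  rcases Sym2.eq_iff.mp hxy with ⟨rfl, rfl⟩ | ⟨rfl, rfl⟩
  · exact hy hb
  · exact hy ha

lemma not_mem_boundary_out {G : SimpleGraph V} {X : Set V} {a b : V}
    (ha : a ∉ X) (hb : b ∉ X) : s(a,b) ∉ edgeBoundary G X := by
  rintro ⟨-, x, y, hxy, hx, hy⟩
  rcases Sym2.eq_iff.mp hxy with ⟨rfl, rfl⟩ | ⟨rfl, rfl⟩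
  · exact ha hx
  · exact hb hx

lemma del_adj_mem {G : SimpleGraph V} {X : Set V} {a b : V}
    (h : (G.deleteEdges (edgeBoundary G X)).Adj a b) : a ∈ X ↔ b ∈ X := by
  rw [SimpleGraph.deleteEdges_adj] at h
  obtain ⟨hadj, hne⟩ := h
  constructor
  · intro ha; by_contra hb; exact hne (mem_boundary hadj ha hb)
  · intro hb; by_contra ha
    exact hne (by rw [Sym2.eq_swap]; exact mem_boundary hadj.symm hb ha)

lemma restricted_of_X (G : SimpleGraph V) [Finite V] {X : Set V}
    (hne : X.Nonempty) (hne' : Xᶜ.Nonempty)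
    (hin : ∀ z ∈ X, ∃ z' ∈ X, G.Adj z z')
    (hout : ∀ z ∉ X, ∃ z', z' ∉ X ∧ G.Adj z z') :
    IsKRestrictedEdgeCut G 2 (edgeBoundary G X) := by
  refine ⟨fun e he => he.1, ?_, ?_⟩
  · intro hc
    obtain ⟨x, hx⟩ := hne; obtain ⟨y, hy⟩ := hne'
    obtain ⟨w⟩ := hc.preconnected x y
    exact hy (walk_mem (fun a b hadj ha => (del_adj_mem hadj).mp ha) w hx)
  · intro c
    obtain ⟨z, hz⟩ := Quot.exists_rep c
    have hzc : z ∈ c.supp := by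
      rw [SimpleGraph.ConnectedComponent.mem_supp_iff]; exact hz
    have key : ∃ z', z ≠ z' ∧ (G.deleteEdges (edgeBoundary G X)).Adj z z' := by
      by_cases hzX : z ∈ X
      · obtain ⟨z', hz', hadj⟩ := hin z hzX
        exact ⟨z', hadj.ne, SimpleGraph.deleteEdges_adj.mpr
          ⟨hadj, not_mem_boundary_in hzX hz'⟩⟩
      · obtain ⟨z', hz', hadj⟩ := hout z hzX
        exact ⟨z', hadj.ne, SimpleGraph.deleteEdges_adj.mpr
          ⟨hadj, not_mem_boundary_out hzX hz'⟩⟩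
    obtain ⟨z', hne_z, hadj⟩ := key
    have hz'c : z' ∈ c.supp := by
      rw [SimpleGraph.ConnectedComponent.mem_supp_iff, ← hz]
      exact SimpleGraph.ConnectedComponent.eq.mpr hadj.symm.reachable
    calc 2 = ({z, z'} : Set V).ncard := (Set.ncard_pair hne_z).symm
      _ ≤ c.supp.ncard := Set.ncard_le_ncard (by
          intro x hx
          rcases hx with rfl | hx
          · exact hzc
          · rcases hx with rfl; exact hz'c) (Set.toFinite _)

lemma one_le_deg {G : SimpleGraph V} [Finite V] {a b : V} (h : G.Adj a b) :
    1 ≤ deg G a :=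
  (Set.ncard_pos (Set.toFinite _)).mpr ⟨b, h⟩

lemma two_le_deg {G : SimpleGraph V} [Finite V] {a b c : V} (hb : G.Adj a b)
    (hc : G.Adj a c) (hbc : b ≠ c) : 2 ≤ deg G a := by
  calc 2 = ({b, c} : Set V).ncard := (Set.ncard_pair hbc).symm
    _ ≤ (G.neighborSet a).ncard := Set.ncard_le_ncard (by
        intro x hx
        rcases hx with rfl | hx
        · exact hb
        · rcases hx with rfl; exact hc) (Set.toFinite _)

lemma exists_nbr (G : SimpleGraph V) [Fintype V] (hconn : G.Connected)
    (hcard : 2 ≤ Fintype.card V) (z : V) : ∃ y, G.Adj z y := by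
  obtain ⟨y, hy⟩ := Fintype.exists_ne_of_one_lt_card (by omega) z
  obtain ⟨w⟩ := hconn.preconnected z y
  cases w with
  | nil => exact absurd rfl hy
  | cons h p => exact ⟨_, h⟩

lemma boundary_pair_card (G : SimpleGraph V) [Finite V] {u v : V}
    (h : G.Adj u v) : (edgeBoundary G {u, v}).ncard ≤ deg G u + deg G v - 2 := by
  have hsub : edgeBoundary G {u, v} ⊆
      ((fun b => s(u,b)) '' (G.neighborSet u \ {v})) ∪
      ((fun b => s(v,b)) '' (G.neighborSet v \ {u})) := by
    rintro e ⟨hE, a, b, rfl, ha, hb⟩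
    have hadj : G.Adj a b := (G.mem_edgeSet).mp hE
    rcases ha with rfl | ha
    · exact Or.inl ⟨b, ⟨hadj, fun hbv => hb (Or.inr hbv)⟩, rfl⟩
    · rcases ha with rfl
      exact Or.inr ⟨b, ⟨hadj, fun hbu => hb (Or.inl hbu)⟩, rfl⟩
  have h1 : ((fun b => s(u,b)) '' (G.neighborSet u \ {v})).ncard ≤ deg G u - 1 := by
    calc _ ≤ (G.neighborSet u \ {v}).ncard := Set.ncard_image_le (Set.toFinite _)
      _ = deg G u - 1 := Set.ncard_diff_singleton_of_mem h
  have h2 : ((fun b => s(v,b)) '' (G.neighborSet v \ {u})).ncard ≤ deg G v - 1 := by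
    calc _ ≤ (G.neighborSet v \ {u}).ncard := Set.ncard_image_le (Set.toFinite _)
      _ = deg G v - 1 := Set.ncard_diff_singleton_of_mem h.symm
  have hu1 : 1 ≤ deg G u := one_le_deg h
  have hv1 : 1 ≤ deg G v := one_le_deg h.symm
  have := Set.ncard_le_ncard hsub (Set.toFinite _)
  have := Set.ncard_union_le ((fun b => s(u,b)) '' (G.neighborSet u \ {v}))
    ((fun b => s(v,b)) '' (G.neighborSet v \ {u}))
  omega

lemma star_iso (G : SimpleGraph V) [Fintype V] {u : V}
    (hall : ∀ z, z ≠ u → G.neighborSet z = {u}) :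
    Nonempty (G ≃g completeBipartiteGraph (Fin 1) (Fin (Fintype.card V - 1))) := by
  classical
  have hAdj : ∀ a b : V, G.Adj a b ↔ ((a = u ∧ ¬ b = u) ∨ (b = u ∧ ¬ a = u)) := by
    intro a b
    constructor
    · intro h
      by_cases ha : a = u
      · subst ha
        exact Or.inl ⟨rfl, fun hb => G.loopless.irrefl a (hb ▸ h)⟩
      · have hb : b ∈ G.neighborSet a := h
        rw [hall a ha] at hb
        exact Or.inr ⟨hb, ha⟩
    · rintro (⟨rfl, hb⟩ | ⟨rfl, ha⟩)
      · have : a ∈ G.neighborSet b := by rw [hall b hb]; exact rfl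
        exact ((G.mem_neighborSet b a).mp this).symm
      · have : b ∈ G.neighborSet a := by rw [hall a ha]; exact rfl
        exact this
  have h1 : Fintype.card {x : V // x = u} = 1 := Fintype.card_subtype_eq u
  have h2 : Fintype.card {x : V // ¬ x = u} = Fintype.card V - 1 := by
    rw [Fintype.card_subtype_compl, h1]
  let e1 : {x : V // x = u} ≃ Fin 1 := Fintype.equivFinOfCardEq h1
  let e2 : {x : V // ¬ x = u} ≃ Fin (Fintype.card V - 1) := Fintype.equivFinOfCardEq h2
  let e : V ≃ (Fin 1 ⊕ Fin (Fintype.card V - 1)) :=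
    (Equiv.sumCompl (· = u)).symm.trans (Equiv.sumCongr e1 e2)
  refine ⟨⟨e, ?_⟩⟩
  intro a b
  rw [hAdj]
  by_cases ha : a = u <;> by_cases hb : b = u <;>
    simp [e, completeBipartiteGraph, Equiv.sumCompl_symm_apply_of_pos,
      Equiv.sumCompl_symm_apply_of_neg, ha, hb]

lemma xiMin_le {G : SimpleGraph V} {a b : V} (h : G.Adj a b) :
    xiMin G ≤ deg G a + deg G b - 2 := Nat.sInf_le ⟨a, b, h, rfl⟩

lemma caseB (G : SimpleGraph V) [Fintype V] (hconn : G.Connected)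
    (hcard : 4 ≤ Fintype.card V)
    (hstar : ¬ Nonempty
      (G ≃g completeBipartiteGraph (Fin 1) (Fin (Fintype.card V - 1))))
    {u v w : V} (hadj : G.Adj u v) (hw : G.neighborSet w = {u}) (hwv : w ≠ v)
    (hxi : xiMin G = deg G u + deg G v - 2) :
    ∃ S, IsKRestrictedEdgeCut G 2 S ∧ S.ncard ≤ xiMin G := by
  classical
  have hadj_wu : G.Adj w u := by
    have : u ∈ G.neighborSet w := by rw [hw]; exact rfl
    exact this
  have hadj_uw := hadj_wu.symm
  have hdw : deg G w = 1 := by rw [deg, hw, Set.ncard_singleton]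
  have hxile : xiMin G ≤ deg G u + deg G w - 2 := xiMin_le hadj_uw
  have hdu2 : 2 ≤ deg G u := two_le_deg hadj hadj_uw (fun h => hwv h.symm)
  have hdv1 : 1 ≤ deg G v := one_le_deg hadj.symm
  have hdv : deg G v = 1 := by omega
  have hv : G.neighborSet v = {u} := by
    obtain ⟨a, ha⟩ := Set.ncard_eq_one.mp hdv
    have hu : u ∈ G.neighborSet v := hadj.symm
    rw [ha] at hu ⊢
    rcases hu with rfl
    rfl
  set L : Set V := {z | G.neighborSet z = {u}} with hLdef
  set X : Set V := insert u L with hXdef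
  have hvL : v ∈ L := hv
  have hwL : w ∈ L := hw
  have hvX : v ∈ X := Or.inr hvL
  have hwX : w ∈ X := Or.inr hwL
  have hXc : Xᶜ.Nonempty := by
    by_contra h
    rw [Set.not_nonempty_iff_eq_empty, Set.compl_empty_iff] at h
    refine hstar (star_iso G (u := u) ?_)
    intro z hz
    have hzX : z ∈ X := h ▸ Set.mem_univ z
    rcases hzX with rfl | hzL
    · exact absurd rfl hz
    · exact hzL
  have hin : ∀ z ∈ X, ∃ z' ∈ X, G.Adj z z' := by
    intro z hz
    rcases hz with rfl | hzL
    · exact ⟨v, hvX, hadj⟩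
    · refine ⟨u, Or.inl rfl, ?_⟩
      have : u ∈ G.neighborSet z := by rw [hzL]; exact rfl
      exact this
  have hout : ∀ z ∉ X, ∃ z', z' ∉ X ∧ G.Adj z z' := by
    intro z hz
    have hzu : z ≠ u := fun h => hz (Or.inl h)
    have hzL : G.neighborSet z ≠ {u} := fun h => hz (Or.inr h)
    obtain ⟨y0, hy0⟩ := exists_nbr G hconn (by omega) z
    have hyu : ∃ y, G.Adj z y ∧ y ≠ u := by
      by_contra hc
      push_neg at hc
      apply hzL
      apply Set.eq_singleton_iff_unique_mem.mpr
      refine ⟨?_, fun x hx => hc x hx⟩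
      have h0 := hc y0 hy0
      subst h0
      exact hy0
    obtain ⟨y, hzy, hyu⟩ := hyu
    refine ⟨y, ?_, hzy⟩
    rintro (rfl | hyL)
    · exact hyu rfl
    · have : z ∈ G.neighborSet y := hzy.symm
      rw [hyL] at this
      exact hzu this
  have hres := restricted_of_X G ⟨u, Or.inl rfl⟩ hXc hin hout
  refine ⟨edgeBoundary G X, hres, ?_⟩
  have hsub : edgeBoundary G X ⊆ (fun b => s(u,b)) '' (G.neighborSet u \ X) := by
    rintro e ⟨hE, a, b, rfl, ha, hb⟩
    have hab : G.Adj a b := (G.mem_edgeSet).mp hE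
    rcases ha with rfl | haL
    · exact ⟨b, ⟨hab, hb⟩, rfl⟩
    · exfalso
      have hbmem : b ∈ G.neighborSet a := hab
      rw [haL] at hbmem
      rcases hbmem with rfl
      exact hb (Or.inl rfl)
  have h1 : (edgeBoundary G X).ncard ≤ (G.neighborSet u \ X).ncard :=
    le_trans (Set.ncard_le_ncard hsub (Set.toFinite _))
      (Set.ncard_image_le (Set.toFinite _))
  have h2 : (G.neighborSet u \ X).ncard + 2 ≤ deg G u := by
    have hdisj : Disjoint (G.neighborSet u \ X) ({v, w} : Set V) := by
      rw [Set.disjoint_right]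
      rintro x hx hmem
      rcases hx with rfl | hx
      · exact hmem.2 hvX
      · rcases hx with rfl; exact hmem.2 hwX
    have hsub2 : (G.neighborSet u \ X) ∪ {v, w} ⊆ G.neighborSet u := by
      rintro x (hx | hx)
      · exact hx.1
      · rcases hx with rfl | hx
        · exact hadj
        · rcases hx with rfl; exact hadj_uw
    calc (G.neighborSet u \ X).ncard + 2
        = (G.neighborSet u \ X).ncard + ({v, w} : Set V).ncard := by
          rw [Set.ncard_pair (fun h => hwv h.symm)]
      _ = ((G.neighborSet u \ X) ∪ {v, w}).ncard :=
          (Set.ncard_union_eq hdisj (Set.toFinite _) (Set.toFinite _)).symm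
      _ ≤ deg G u := Set.ncard_le_ncard hsub2 (Set.toFinite _)
  omega


end Aux

/-- A connected graph G on at least 4 vertices that is not a star
K_{1,n-1} has a restricted edge-cut, and λ₂(G) ≤ ξ(G). -/
theorem stmt14 {V : Type*} [Fintype V] (G : SimpleGraph V)
    (hconn : G.Connected) (hcard : 4 ≤ Fintype.card V)
    (hstar : ¬ Nonempty
      (G ≃g completeBipartiteGraph (Fin 1) (Fin (Fintype.card V - 1)))) :
    (∃ S : Set (Sym2 V), IsKRestrictedEdgeCut G 2 S) ∧
    lamK G 2 ≤ ((xiMin G : ℕ) : ℕ∞) := by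
  classical
  have hV : Nonempty V := Fintype.card_pos_iff.mp (by omega)
  obtain ⟨z0⟩ := hV
  obtain ⟨y0, hy0⟩ := exists_nbr G hconn (by omega) z0
  have hSne : {k | ∃ a b, G.Adj a b ∧ k = deg G a + deg G b - 2}.Nonempty :=
    ⟨_, z0, y0, hy0, rfl⟩
  have hmem : xiMin G ∈ {k | ∃ a b, G.Adj a b ∧ k = deg G a + deg G b - 2} :=
    Nat.sInf_mem hSne
  obtain ⟨u, v, huv, hxi⟩ := hmem
  have key : ∃ S, IsKRestrictedEdgeCut G 2 S ∧ S.ncard ≤ xiMin G := by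
    by_cases hA : ∀ z, z ≠ u → z ≠ v → ∃ y, y ≠ u ∧ y ≠ v ∧ G.Adj z y
    · refine ⟨edgeBoundary G {u, v}, ?_, ?_⟩
      · refine restricted_of_X G ⟨u, Or.inl rfl⟩ ?_ ?_ ?_
        · by_contra h
          rw [Set.not_nonempty_iff_eq_empty, Set.compl_empty_iff] at h
          have hle : Fintype.card V ≤ 2 := by
            have e1 : Fintype.card V = (Set.univ : Set V).ncard := by
              rw [Set.ncard_univ, Nat.card_eq_fintype_card]
            have e2 : (Set.univ : Set V).ncard ≤ ({u, v} : Set V).ncard := by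
              rw [h]
            have e3 := Set.ncard_insert_le u ({v} : Set V)
            have e4 : ({v} : Set V).ncard = 1 := Set.ncard_singleton v
            omega
          omega
        · rintro z (rfl | hz)
          · exact ⟨v, Or.inr rfl, huv⟩
          · rcases hz with rfl; exact ⟨u, Or.inl rfl, huv.symm⟩
        · intro z hz
          have h1 : z ≠ u := fun h => hz (Or.inl h)
          have h2 : z ≠ v := fun h => hz (Or.inr h)
          obtain ⟨y, hyu, hyv, hzy⟩ := hA z h1 h2
          exact ⟨y, by rintro (rfl | h); exacts [hyu rfl, hyv (by rcases h with rfl; rfl)], hzy⟩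
      · rw [hxi]
        exact boundary_pair_card G huv
    · push_neg at hA
      obtain ⟨z, hzu, hzv, hz⟩ := hA
      have hNz : G.neighborSet z ⊆ ({u, v} : Set V) := by
        intro y hy
        by_contra hmem2
        have hyu : y ≠ u := fun h => hmem2 (Or.inl h)
        have hyv : y ≠ v := fun h => hmem2 (Or.inr h)
        exact hz y hyu hyv hy
      by_cases hu_in : u ∈ G.neighborSet z
      · by_cases hv_in : v ∈ G.neighborSet z
        · exfalso
          have hNz_eq : G.neighborSet z = {u, v} := by
            refine Set.Subset.antisymm hNz ?_
            rintro y (rfl | hy)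
            · exact hu_in
            · rcases hy with rfl; exact hv_in
          have hdz : deg G z = 2 := by rw [deg, hNz_eq, Set.ncard_pair huv.ne]
          have hadj_zu : G.Adj z u := hu_in
          have hadj_zv : G.Adj z v := hv_in
          have hle1 : xiMin G ≤ deg G u + deg G z - 2 := xiMin_le hadj_zu.symm
          have hle2 : xiMin G ≤ deg G v + deg G z - 2 := xiMin_le hadj_zv.symm
          have hdu : 2 ≤ deg G u := two_le_deg huv hadj_zu.symm (fun h => hzv h.symm)
          have hdv : 2 ≤ deg G v := two_le_deg huv.symm hadj_zv.symm (fun h => hzu h.symm)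
          have hdu2 : deg G u = 2 := by omega
          have hdv2 : deg G v = 2 := by omega
          have hNu : G.neighborSet u = {v, z} := by
            refine (Set.eq_of_subset_of_ncard_le ?_ ?_ (Set.toFinite _)).symm
            · rintro y (rfl | hy)
              · exact huv
              · rcases hy with rfl; exact hadj_zu.symm
            · rw [Set.ncard_pair (fun h => hzv h.symm)]
              exact le_of_eq hdu2
          have hNv : G.neighborSet v = {u, z} := by
            refine (Set.eq_of_subset_of_ncard_le ?_ ?_ (Set.toFinite _)).symm
            · rintro y (rfl | hy)
              · exact huv.symm
              · rcases hy with rfl; exact hadj_zv.symm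
            · rw [Set.ncard_pair (fun h => hzu h.symm)]
              exact le_of_eq hdv2
          have hclosed : ∀ a b, G.Adj a b → a ∈ ({u, v, z} : Set V) →
              b ∈ ({u, v, z} : Set V) := by
            rintro a b hab (rfl | rfl | rfl)
            · have hbm : b ∈ G.neighborSet a := hab
              rw [hNu] at hbm
              rcases hbm with rfl | hbm
              · exact Or.inr (Or.inl rfl)
              · rcases hbm with rfl; exact Or.inr (Or.inr rfl)
            · have hbm : b ∈ G.neighborSet a := hab
              rw [hNv] at hbm
              rcases hbm with rfl | hbm
              · exact Or.inl rfl
              · rcases hbm with rfl; exact Or.inr (Or.inr rfl)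
            · have hbm : b ∈ G.neighborSet a := hab
              rw [hNz_eq] at hbm
              rcases hbm with rfl | hbm
              · exact Or.inl rfl
              · rcases hbm with rfl; exact Or.inr (Or.inl rfl)
          have huniv : ∀ x : V, x ∈ ({u, v, z} : Set V) := by
            intro x
            obtain ⟨wk⟩ := hconn.preconnected u x
            exact walk_mem hclosed wk (Or.inl rfl)
          have hcard3 : Fintype.card V ≤ 3 := by
            have e1 : Fintype.card V = (Set.univ : Set V).ncard := by
              rw [Set.ncard_univ, Nat.card_eq_fintype_card]
            have e2 : (Set.univ : Set V).ncard ≤ ({u, v, z} : Set V).ncard :=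
              Set.ncard_le_ncard (fun x _ => huniv x) (Set.toFinite _)
            have e3 := Set.ncard_insert_le u ({v, z} : Set V)
            have e4 := Set.ncard_insert_le v ({z} : Set V)
            have e5 : ({z} : Set V).ncard = 1 := Set.ncard_singleton z
            omega
          omega
        · have hNz1 : G.neighborSet z = {u} := by
            refine Set.Subset.antisymm ?_ ?_
            · intro y hy
              rcases hNz hy with rfl | h
              · rfl
              · rcases h with rfl; exact absurd hy hv_in
            · intro y hy
              rcases hy with rfl
              exact hu_in
          exact caseB G hconn hcard hstar huv hNz1 hzv hxi
      · have hv_in : v ∈ G.neighborSet z := by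
          obtain ⟨y, hy⟩ := exists_nbr G hconn (by omega) z
          rcases hNz hy with rfl | h
          · exact absurd hy hu_in
          · rcases h with rfl; exact hy
        have hNz1 : G.neighborSet z = {v} := by
          refine Set.Subset.antisymm ?_ ?_
          · intro y hy
            rcases hNz hy with rfl | h
            · exact absurd hy hu_in
            · exact h
          · intro y hy
            rcases hy with rfl
            exact hv_in
        have hxi2 : xiMin G = deg G v + deg G u - 2 := by
          rw [hxi, Nat.add_comm]
        exact caseB G hconn hcard hstar huv.symm hNz1 hzu hxi2
  obtain ⟨S, hS, hle⟩ := key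
  refine ⟨⟨S, hS⟩, ?_⟩
  calc lamK G 2 ≤ (S.ncard : ℕ∞) := sInf_le ⟨S, hS, rfl⟩
    _ ≤ ((xiMin G : ℕ) : ℕ∞) := by exact_mod_cast hle
end
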